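/- arXiv:1512.02911 — 8 statements merged into one kernel-verified Lean document; each statement's English description precedes it below -/
import Mathlib

section
/- If a graph G contains a bipartite subgraph with bipartition (A, B) such that |A| = λ for some cardinal λ ≥ μ, |B| = λ⁺, and every vertex of B has at least μ neighbours in A, then G does not admit a well-ordering of its vertices in which every vertex has fewer than μ neighbours preceding it (i.e., col(G) > μ). -/
open Cardinal

universe u v

/-- A well-ordering of the vertices of `G` in which every vertex has
fewer than `μ` neighbours preceding it (a *good* well-ordering for `μ`). -/
def HasGoodOrder {V : Type u} (G : SimpleGraph V) (μ : Cardinal.{u}) : Prop :=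
  ∃ r : V → V → Prop, IsWellOrder V r ∧ ∀ v : V, #{w : V | G.Adj v w ∧ r w v} < μ

/-- The colouring number of `G`: the least cardinal `κ` admitting a
well-ordering of the vertices in which each vertex has fewer than `κ`
earlier neighbours. -/
noncomputable def col {V : Type u} (G : SimpleGraph V) : Cardinal.{u} :=
  sInf {μ : Cardinal.{u} | HasGoodOrder G μ}

/-- `X` is robust (for `μ`): every vertex outside `X` has fewer than `μ`
neighbours inside `X`. -/
def Robust {V : Type u} (G : SimpleGraph V) (μ : Cardinal.{u}) (X : Set V) : Prop :=
  ∀ v ∉ X, #(G.neighborSet v ∩ X : Set V) < μ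

/-- `G` contains a `μ`-barricade as a subgraph: disjoint vertex sets `A`, `B`
with `|A| < |B|` such that every vertex of `B` has at least `μ` neighbours in `A`. -/
def HasBarricade {V : Type u} (G : SimpleGraph V) (μ : Cardinal.{u}) : Prop :=
  ∃ A B : Set V, Disjoint A B ∧ #A < #B ∧
    ∀ b ∈ B, μ ≤ #(G.neighborSet b ∩ A : Set V)

/-- `G` contains a `μ`-obstruction of type I as a subgraph: disjoint sets `A`, `B`
with `|A| = λ ≥ μ`, `|B| = λ⁺`, every vertex of `B` having at least `μ`
neighbours in `A` and every vertex of `A` having `λ⁺` neighbours in `B`. -/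
def HasTypeIObstruction {V : Type u} (G : SimpleGraph V) (μ : Cardinal.{u}) : Prop :=
  ∃ (A B : Set V) (lam : Cardinal.{u}), Disjoint A B ∧ μ ≤ lam ∧
    #A = lam ∧ #B = Order.succ lam ∧
    (∀ b ∈ B, μ ≤ #(G.neighborSet b ∩ A : Set V)) ∧
    (∀ a ∈ A, #(G.neighborSet a ∩ B : Set V) = Order.succ lam)

/-- `G` itself is a `μ`-obstruction of type I: a bipartite graph with
bipartition `(A, B)` satisfying the type I conditions. -/
def IsTypeIObstruction {V : Type u} (G : SimpleGraph V) (μ : Cardinal.{u}) : Prop :=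
  ∃ (A B : Set V) (lam : Cardinal.{u}), Disjoint A B ∧ A ∪ B = Set.univ ∧
    (∀ a b, G.Adj a b → (a ∈ A ∧ b ∈ B) ∨ (a ∈ B ∧ b ∈ A)) ∧
    μ ≤ lam ∧ #A = lam ∧ #B = Order.succ lam ∧
    (∀ b ∈ B, μ ≤ #(G.neighborSet b ∩ A : Set V)) ∧
    (∀ a ∈ A, #(G.neighborSet a ∩ B : Set V) = Order.succ lam)

/-- `C` is closed and unbounded in the ordinal `o`. -/
def IsClubIn (C : Set Ordinal.{v}) (o : Ordinal.{v}) : Prop :=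
  (∀ a < o, ∃ b ∈ C, a ≤ b ∧ b < o) ∧
  (∀ a < o, a ≠ 0 → sSup (C ∩ Set.Iio a) = a → a ∈ C)

/-- `S` is stationary in the ordinal `o`: it meets every club subset of `o`. -/
def IsStationaryIn (S : Set Ordinal.{v}) (o : Ordinal.{v}) : Prop :=
  ∀ C : Set Ordinal.{v}, IsClubIn C o → (S ∩ C ∩ Set.Iio o).Nonempty

/-- The set `T_H` of vertices `α` (ordinals) with `cf α = cf μ`, whose set of
neighbours below `α` has order type `μ` and supremum `α`. -/
noncomputable def typeIITarget (H : SimpleGraph Ordinal.{v}) (μ : Cardinal.{v}) :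
    Set Ordinal.{v} :=
  {α | α.cof = μ.ord.cof ∧
    Ordinal.type (Subrel ((· < ·) : Ordinal.{v} → Ordinal.{v} → Prop)
      (· ∈ H.neighborSet α ∩ Set.Iio α)) = Ordinal.lift.{v + 1} μ.ord ∧
    sSup (H.neighborSet α ∩ Set.Iio α) = α}

/-- `H` is a `μ`-obstruction of type II with vertex set the regular cardinal
`κ > μ` (realised as the ordinals below `κ`): `T_H` is stationary in `κ`. -/
def IsTypeIIObstruction (H : SimpleGraph Ordinal.{v}) (μ κ : Cardinal.{v}) : Prop :=
  μ < κ ∧ κ.IsRegular ∧ (∀ a b, H.Adj a b → a < κ.ord ∧ b < κ.ord) ∧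
  IsStationaryIn (typeIITarget H μ) κ.ord

/-- `G` contains a `μ`-obstruction of type II as a subgraph. -/
def HasTypeIIObstruction {V : Type u} (G : SimpleGraph V) (μ : Cardinal.{v}) : Prop :=
  ∃ (κ : Cardinal.{v}) (H : SimpleGraph Ordinal.{v}) (f : Ordinal.{v} → V),
    Set.InjOn f (Set.Iio κ.ord) ∧ (∀ a b, H.Adj a b → G.Adj (f a) (f b)) ∧
    IsTypeIIObstruction H μ κ

/-- `G` contains a complete subgraph on `μ` vertices. -/
def HasCompleteSubgraph {V : Type u} (G : SimpleGraph V) (μ : Cardinal.{u}) : Prop :=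
  ∃ S : Set V, #S = μ ∧ S.Pairwise G.Adj

/-- `G` contains an induced copy of the complete bipartite graph `K_{k,ω}`. -/
def HasInducedKkOmega {V : Type u} (G : SimpleGraph V) (k : ℕ) : Prop :=
  ∃ A B : Set V, Disjoint A B ∧ #A = (k : Cardinal.{u}) ∧ #B = ℵ₀ ∧
    (∀ a ∈ A, ∀ b ∈ B, G.Adj a b) ∧
    (∀ a ∈ A, ∀ a' ∈ A, a ≠ a' → ¬ G.Adj a a') ∧
    (∀ b ∈ B, ∀ b' ∈ B, b ≠ b' → ¬ G.Adj b b')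

/-!
Fix a good well-ordering for `μ` and send each `b ∈ B` to a neighbour in `A` that comes
after `b`; one exists because `b` has at least `μ` neighbours in `A` but fewer than `μ`
earlier ones. Each fibre of this map consists of earlier neighbours of one vertex of `A`,
so has size `< μ`, whence `|B| ≤ |A| · μ = |A|` once `|A| ≥ μ` is infinite.
-/

section

variable {V : Type u} (G : SimpleGraph V)

theorem HasGoodOrder.mono {G : SimpleGraph V} {μ ν : Cardinal.{u}} (h : HasGoodOrder G μ)
    (hμν : μ ≤ ν) : HasGoodOrder G ν := by
  obtain ⟨r, hwo, hsmall⟩ := h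
  exact ⟨r, hwo, fun v => (hsmall v).trans_le hμν⟩

theorem hasGoodOrder_succ_mk : HasGoodOrder G (Order.succ #V) :=
  ⟨WellOrderingRel, WellOrderingRel.isWellOrder,
    fun _ => (mk_set_le _).trans_lt (Order.lt_succ _)⟩

theorem lt_col_of_not_hasGoodOrder {μ : Cardinal.{u}} (h : ¬ HasGoodOrder G μ) :
    μ < col G := by
  by_contra! hle
  have hcol : HasGoodOrder G (col G) :=
    csInf_mem (s := {ν | HasGoodOrder G ν}) ⟨_, hasGoodOrder_succ_mk G⟩
  exact h (hcol.mono hle)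

section GoodOrder

variable {G} {μ : Cardinal.{u}} {r : V → V → Prop} [IsWellOrder V r]
  (hsmall : ∀ v : V, #{w : V | G.Adj v w ∧ r w v} < μ)
include hsmall

theorem exists_adj_later_of_le_mk_neighborSet_inter {A : Set V} {v : V} (hv : v ∉ A)
    (hdeg : μ ≤ #(G.neighborSet v ∩ A : Set V)) : ∃ a ∈ A, G.Adj v a ∧ r v a := by
  by_contra! hlater
  have hearlier : (G.neighborSet v ∩ A : Set V) ⊆ {w : V | G.Adj v w ∧ r w v} := by
    rintro w ⟨hadj, hwA⟩
    rcases trichotomous_of r w v with hwv | rfl | hvw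
    · exact ⟨hadj, hwv⟩
    · exact absurd hwA hv
    · exact absurd hvw (hlater w hwA hadj)
  exact (hdeg.trans (mk_le_mk_of_subset hearlier)).not_gt (hsmall v)

theorem mk_le_mk_mul_of_le_mk_neighborSet_inter {A B : Set V} (hd : Disjoint A B)
    (hdeg : ∀ b ∈ B, μ ≤ #(G.neighborSet b ∩ A : Set V)) : #B ≤ #A * μ := by
  have hlater (b : B) : ∃ a : A, G.Adj b a ∧ r b a := by
    obtain ⟨a, ha, hadj, hr⟩ := exists_adj_later_of_le_mk_neighborSet_inter hsmall
      (Set.disjoint_right.mp hd b.2) (hdeg b b.2)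
    exact ⟨⟨a, ha⟩, hadj, hr⟩
  choose f hadj hr using hlater
  refine mk_le_mk_mul_of_mk_preimage_le f fun a => ?_
  have hfibre : #(f ⁻¹' {a}) ≤ #{w : V | G.Adj a w ∧ r w a} := by
    refine mk_le_of_injective (f := fun ⟨b, (hb : f b = a)⟩ =>
      ⟨b, hb ▸ (hadj b).symm, hb ▸ hr b⟩) ?_
    rintro ⟨b, _⟩ ⟨b', _⟩ h
    exact Subtype.ext (Subtype.ext (Subtype.mk.inj h))
  exact hfibre.trans (hsmall a).le

end GoodOrder

theorem not_hasGoodOrder_of_hasBarricade {μ : Cardinal.{u}} (hμ : ℵ₀ ≤ μ)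
    (h : HasBarricade G μ) : ¬ HasGoodOrder G μ := by
  rintro ⟨r, hwo, hsmall⟩
  obtain ⟨A, B, hd, hAB, hdeg⟩ := h
  obtain ⟨b, hb⟩ : B.Nonempty := mk_set_ne_zero_iff.mp (pos_of_gt hAB).ne'
  have hμA : μ ≤ #A := (hdeg b hb).trans (mk_le_mk_of_subset Set.inter_subset_right)
  have hB : #B ≤ #A := calc
    #B ≤ #A * μ := mk_le_mk_mul_of_le_mk_neighborSet_inter hsmall hd hdeg
    _ ≤ max #A μ := mul_le_max_of_aleph0_le_left (hμ.trans hμA)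
    _ = #A := max_eq_left hμA
  exact hAB.not_ge hB

end

theorem stmt0_general {V : Type u} (G : SimpleGraph V) (μ : Cardinal.{u}) (hμ : ℵ₀ ≤ μ)
    (A B : Set V) (lam : Cardinal.{u}) (hd : Disjoint A B)
    (hA : #A = lam) (hB : #B = Order.succ lam)
    (hdeg : ∀ b ∈ B, μ ≤ #(G.neighborSet b ∩ A : Set V)) :
    ¬ HasGoodOrder G μ ∧ μ < col G := by
  have hAB : #A < #B := hA ▸ hB ▸ Order.lt_succ lam
  have hbad : ¬ HasGoodOrder G μ :=
    not_hasGoodOrder_of_hasBarricade G hμ ⟨A, B, hd, hAB, hdeg⟩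
  exact ⟨hbad, lt_col_of_not_hasGoodOrder G hbad⟩

/-- a type I obstruction-like configuration (sets `A`, `B` with
`|A| = λ ≥ μ`, `|B| = λ⁺`, each vertex of `B` having `≥ μ` neighbours in `A`)
forces `col(G) > μ`: there is no good well-ordering for `μ`. -/
theorem stmt0 {V : Type u} (G : SimpleGraph V) (μ : Cardinal.{u}) (hμ : ℵ₀ ≤ μ)
    (A B : Set V) (lam : Cardinal.{u}) (hd : Disjoint A B) (hlam : μ ≤ lam)
    (hA : #A = lam) (hB : #B = Order.succ lam)
    (hdeg : ∀ b ∈ B, μ ≤ #(G.neighborSet b ∩ A : Set V)) :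
    ¬ HasGoodOrder G μ ∧ μ < col G :=
  stmt0_general G μ hμ A B lam hd hA hB hdeg
end

section
/- Let κ > μ be a regular cardinal and G a graph with vertex set κ. Suppose the set T_G of ordinals α < κ such that cf(α) = cf(μ), the order type of N(α) ∩ α is μ, and sup(N(α) ∩ α) = α, is stationary in κ. Then G admits no good well-ordering witnessing colouring number at most μ; that is, col(G) > μ. -/
open Cardinal

universe u v

/-! A good well-ordering of `κ` makes the set of vertices below `δ` robust whenever `δ` is closed
under `γ ↦ sup` of the earlier neighbours of `γ`: a neighbour `w < δ` of a vertex `v ≥ δ` that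
comes after `v` would have `v` among its earlier neighbours. As `κ` is regular and uncountable,
these closure points form a club, which the stationary set `T_G` meets in some `α`. The `μ`
neighbours of `α` below `α` then contradict robustness of the vertices below `α`. -/

open Ordinal Set

namespace SimpleGraph

variable {V : Type u} (G : SimpleGraph V)

def earlierNeighborSet (r : V → V → Prop) (v : V) : Set V :=
  {w | G.Adj v w ∧ r w v}

variable {G}

theorem robust_of_earlierNeighborSet_subset {μ : Cardinal.{u}} {r : V → V → Prop}
    [Std.Trichotomous r] (hbd : ∀ v, #(G.earlierNeighborSet r v) < μ) {X : Set V}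
    (hX : ∀ v ∈ X, G.earlierNeighborSet r v ⊆ X) : Robust G μ X := by
  intro v hv
  refine (mk_le_mk_of_subset (t := G.earlierNeighborSet r v) ?_).trans_lt (hbd v)
  rintro w ⟨hvw, hwX⟩
  refine ⟨hvw, ?_⟩
  rcases trichotomous_of r w v with hwv | rfl | hvw'
  · exact hwv
  · exact absurd hwX hv
  · exact absurd (hX w hwX ⟨hvw.symm, hvw'⟩) hv

theorem card_neighborSet_inter_le_induce {s t : Set V} (hts : t ⊆ s) (v : s) :
    #(G.neighborSet v ∩ t : Set V) ≤
      #((G.induce s).neighborSet v ∩ Subtype.val ⁻¹' t : Set s) :=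
  mk_le_of_injective (f := fun w : ↥(G.neighborSet v ∩ t) ↦ ⟨⟨w.1, hts w.2.2⟩, w.2.1, w.2.2⟩)
    fun _ _ h ↦ Subtype.ext (congrArg (fun w ↦ w.1.1) h)

end SimpleGraph

theorem card_neighborSet_inter_Iio_of_mem_typeIITarget {G : SimpleGraph Ordinal.{u}}
    {μ : Cardinal.{u}} {α : Ordinal.{u}} (hα : α ∈ typeIITarget G μ) :
    #(G.neighborSet α ∩ Iio α : Set Ordinal.{u}) = Cardinal.lift.{u + 1} μ := by
  have h := congrArg card hα.2.1
  rwa [card_type, ← lift_card, card_ord] at h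

section Club

variable {κ : Cardinal.{u}}

theorem sSup_image_val_lt_ord (hκ : κ.IsRegular) {s : Set (Iio κ.ord)}
    (hs : #s < Cardinal.lift.{u + 1} κ) : sSup (Subtype.val '' s) < κ.ord := by
  refine sSup_lt_of_lt_cof ?_ fun _ ⟨w, _, hw⟩ ↦ hw ▸ w.2
  rw [← lift_cof, hκ.cof_ord]
  exact mk_image_le.trans_lt hs

theorem isClubIn_setOf_forall_lt (hκ : κ.IsRegular) (hκω : ℵ₀ < κ)
    (f : Iio κ.ord → Ordinal.{u}) (hf : ∀ γ, f γ < κ.ord) :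
    IsClubIn {δ | ∀ γ : Iio κ.ord, γ.1 < δ → f γ < δ} κ.ord := by
  refine ⟨fun a ha ↦ ?_, fun a _ _ ha γ hγ ↦ ?_⟩
  · set F : Ordinal.{u} → Ordinal.{u} := fun δ ↦ ⨆ γ : {γ : Iio κ.ord // γ.1 < δ}, f γ + 1
    have hF : ∀ δ < κ.ord, F δ < κ.ord := by
      intro δ hδ
      refine lift_iSup_add_one_lt_of_lt_cof ?_ fun γ ↦ hf γ
      rw [← lift_cof, hκ.cof_ord, Cardinal.lift_id'.{u, u + 1}]
      have hcard : #{γ : Iio κ.ord // γ.1 < δ} ≤ #(Iio δ) :=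
        mk_le_of_injective (f := fun γ ↦ ⟨γ.1.1, γ.2⟩) fun _ _ h ↦ by
          simpa [Subtype.ext_iff] using h
      rw [Cardinal.mk_Iio_ordinal] at hcard
      exact hcard.trans_lt (Cardinal.lift_lt.2 (lt_ord.1 hδ))
    have hlt_F : ∀ (δ) (γ : Iio κ.ord), γ.1 < δ → f γ < F δ := fun δ γ hγ ↦
      (Order.lt_add_one_iff.2 le_rfl).trans_le
        (Ordinal.le_iSup (fun γ : {γ : Iio κ.ord // γ.1 < δ} ↦ f γ + 1) ⟨γ, hγ⟩)
    -- every `γ` below `nfp F a = ⨆ n, F^[n] a` lies below some iterate, so `f γ` lies below the next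
    refine ⟨nfp F a, fun γ hγ ↦ ?_, le_nfp F a, nfp_lt_ord_of_isRegular hκ hκω.ne' hF ha⟩
    obtain ⟨n, hn⟩ := lt_nfp_iff.1 hγ
    exact (hlt_F _ γ hn).trans_le <| by
      simpa only [Function.iterate_succ_apply'] using iterate_le_nfp F a (n + 1)
  · obtain ⟨δ, ⟨hδ, hδa⟩, hγδ⟩ := exists_lt_of_lt_csSup' (ha ▸ hγ)
    exact (hδ γ hγδ).trans hδa

theorem exists_isClubIn_robust_setOf_lt (hκ : κ.IsRegular) (hκω : ℵ₀ < κ)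
    {H : SimpleGraph (Iio κ.ord)} {ν : Cardinal.{u + 1}} (hν : ν ≤ Cardinal.lift.{u + 1} κ)
    (hH : HasGoodOrder H ν) :
    ∃ C, IsClubIn C κ.ord ∧ ∀ δ ∈ C, Robust H ν {v | v.1 < δ} := by
  obtain ⟨r, hr, hbd⟩ := hH
  have hbd' : ∀ v, #(H.earlierNeighborSet r v) < ν := hbd
  have hbdd : ∀ v, BddAbove (Subtype.val '' H.earlierNeighborSet r v) := fun v ↦
    ⟨κ.ord, by rintro _ ⟨w, -, rfl⟩; exact w.2.le⟩
  refine ⟨_, isClubIn_setOf_forall_lt hκ hκω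
    (fun v ↦ sSup (Subtype.val '' H.earlierNeighborSet r v))
    (fun v ↦ sSup_image_val_lt_ord hκ ((hbd' v).trans_le hν)), fun δ hδ ↦ ?_⟩
  refine H.robust_of_earlierNeighborSet_subset hbd' fun v hv w hw ↦ ?_
  exact (le_csSup (hbdd v) ⟨w, hw, rfl⟩).trans_lt (hδ v hv)

end Club

/-- a `μ`-obstruction of type II (graph on a regular cardinal
`κ > μ` with `T_G` stationary) admits no good well-ordering for `μ`. -/
theorem stmt1 (μ κ : Cardinal.{0}) (hμ : ℵ₀ ≤ μ) (G : SimpleGraph Ordinal.{0})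
    (h : IsTypeIIObstruction G μ κ) :
    ¬ HasGoodOrder (G.induce (Set.Iio κ.ord)) (Cardinal.lift.{1} μ) := by
  obtain ⟨hμκ, hκ, -, hT⟩ := h
  intro hgood
  obtain ⟨C, hC, hrobust⟩ :=
    exists_isClubIn_robust_setOf_lt hκ (hμ.trans_lt hμκ) (Cardinal.lift_le.2 hμκ.le) hgood
  obtain ⟨α, ⟨hαT, hαC⟩, hακ⟩ := hT C hC
  have hμ_le : Cardinal.lift.{1} μ ≤
      #((G.induce (Iio κ.ord)).neighborSet ⟨α, hακ⟩ ∩ {v | v.1 < α} : Set (Iio κ.ord)) :=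
    (card_neighborSet_inter_Iio_of_mem_typeIITarget hαT).ge.trans
      (G.card_neighborSet_inter_le_induce (Iio_subset_Iio hακ.le) ⟨α, hακ⟩)
  exact (hrobust α hαC ⟨α, hακ⟩ (lt_irrefl α)).not_ge hμ_le
end

section
/- If a graph G contains a μ-barricade as a subgraph, then G contains a μ-obstruction of type I as a subgraph. -/
open Cardinal

universe u v

/-!
Take a barricade `(A, B)` with `|A| = λ` least possible; then `μ ≤ λ`, and we may shrink `B` to
size `λ⁺`. Let `A₁ ⊆ A` be the vertices with at most `λ` neighbours in `B`. Together they have at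
most `λ · λ = λ` neighbours in `B`; deleting those leaves `λ⁺` vertices of `B`, all of whose
neighbours in `A` lie in `A₀ = A \ A₁`, and each vertex of `A₀` keeps `λ⁺` neighbours among
them. So `A₀` and the remaining part of `B` form again a barricade, and minimality of `λ` forces
`|A₀| = λ`.
-/

namespace Cardinal

theorem le_mk_sdiff_of_mk_lt {α : Type u} {μ : Cardinal.{u}} {s t : Set α} (hμ : ℵ₀ ≤ μ)
    (hs : μ ≤ #s) (ht : #t < μ) : μ ≤ #(s \ t : Set α) := by
  by_contra! h
  exact (hs.trans (le_mk_sdiff_add_mk s t)).not_gt (add_lt_of_lt hμ h ht)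

theorem mk_biUnion_le_of_forall_mk_le {α ι : Type u} {κ : Cardinal.{u}} (hκ : ℵ₀ ≤ κ) {s : Set ι}
    {f : ι → Set α} (hs : #s ≤ κ) (hf : ∀ i ∈ s, #(f i) ≤ κ) : #(⋃ i ∈ s, f i) ≤ κ :=
  calc #(⋃ i ∈ s, f i) ≤ #s * ⨆ i : s, #(f i) := mk_biUnion_le f s
    _ ≤ κ * κ := mul_le_mul' hs (ciSup_le' fun i ↦ hf i i.2)
    _ = κ := mul_eq_self hκ

end Cardinal

section Barricade

variable {V : Type u} {G : SimpleGraph V} {μ : Cardinal.{u}}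

def IsBarricade (G : SimpleGraph V) (μ : Cardinal.{u}) (A B : Set V) : Prop :=
  Disjoint A B ∧ #A < #B ∧ ∀ b ∈ B, μ ≤ #(G.neighborSet b ∩ A : Set V)

namespace IsBarricade

variable {A B : Set V}

theorem le_mk_left (h : IsBarricade G μ A B) : μ ≤ #A := by
  obtain ⟨b, hb, -⟩ := sdiff_nonempty_of_mk_lt_mk h.2.1
  exact (h.2.2 b hb).trans (mk_le_mk_of_subset Set.inter_subset_right)

theorem exists_subset_mk_eq_succ (h : IsBarricade G μ A B) :
    ∃ B₁ ⊆ B, #B₁ = Order.succ #A ∧ IsBarricade G μ A B₁ := by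
  obtain ⟨B₁, hB₁, hcard⟩ := le_mk_iff_exists_subset.mp (Order.succ_le_of_lt h.2.1)
  refine ⟨B₁, hB₁, hcard, h.1.mono_right hB₁, ?_, fun b hb ↦ h.2.2 b (hB₁ hb)⟩
  rw [hcard]
  exact Order.lt_succ_of_not_isMax (not_isMax _)

theorem exists_subbarricade_forall_mk_neighborSet_eq (hA : ℵ₀ ≤ #A)
    (h : IsBarricade G μ A B) (hB : #B = Order.succ #A) :
    ∃ A₀ ⊆ A, ∃ B₀ ⊆ B, IsBarricade G μ A₀ B₀ ∧ #B₀ = Order.succ #A ∧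
      ∀ a ∈ A₀, #(G.neighborSet a ∩ B₀ : Set V) = Order.succ #A := by
  set A₀ := {a ∈ A | Order.succ #A ≤ #(G.neighborSet a ∩ B : Set V)}
  set N := ⋃ a ∈ A \ A₀, G.neighborSet a ∩ B
  have hN : #N ≤ #A := by
    refine mk_biUnion_le_of_forall_mk_le hA (mk_le_mk_of_subset Set.sdiff_subset) fun a ha ↦ ?_
    exact Order.lt_succ_iff.mp (not_le.mp fun h' ↦ ha.2 ⟨ha.1, h'⟩)
  have hN_lt : #N < Order.succ #A := Order.lt_succ_iff.mpr hN
  have hsucc_le {s : Set V} (hs : Order.succ #A ≤ #s) : Order.succ #A ≤ #(s \ N : Set V) :=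
    le_mk_sdiff_of_mk_lt (hA.trans (Order.le_succ _)) hs hN_lt
  have hB₀ : #(B \ N : Set V) = Order.succ #A :=
    le_antisymm (hB ▸ mk_le_mk_of_subset Set.sdiff_subset) (hsucc_le hB.ge)
  have hnbr (b) (hb : b ∈ B \ N) : G.neighborSet b ∩ A₀ = G.neighborSet b ∩ A := by
    refine subset_antisymm (Set.inter_subset_inter_right _ fun a ha ↦ ha.1) ?_
    rintro a ⟨hab, ha⟩
    by_contra ha₀
    exact hb.2 (Set.mem_biUnion ⟨ha, fun h' ↦ ha₀ ⟨hab, h'⟩⟩ ⟨hab.symm, hb.1⟩)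
  refine ⟨A₀, fun a ha ↦ ha.1, B \ N, Set.sdiff_subset, ⟨?_, ?_, ?_⟩, hB₀, fun a ha ↦ ?_⟩
  · exact h.1.mono (fun a ha ↦ ha.1) Set.sdiff_subset
  · rw [hB₀]
    exact (mk_le_mk_of_subset fun a ha ↦ ha.1).trans_lt (Order.lt_succ_of_not_isMax (not_isMax _))
  · intro b hb
    rw [hnbr b hb]
    exact h.2.2 b hb.1
  · refine le_antisymm (hB₀ ▸ mk_le_mk_of_subset Set.inter_subset_right) ?_
    rw [← Set.inter_sdiff_assoc]
    exact hsucc_le ha.2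

end IsBarricade

theorem exists_isBarricade_forall_mk_le (h : HasBarricade G μ) :
    ∃ A B, IsBarricade G μ A B ∧ ∀ A' B', IsBarricade G μ A' B' → #A ≤ #A' := by
  obtain ⟨⟨A, B⟩, hAB, hmin⟩ := (InvImage.wf (fun p : Set V × Set V ↦ #p.1) wellFounded_lt).has_min
    {p | IsBarricade G μ p.1 p.2} (let ⟨A, B, hAB⟩ := h; ⟨(A, B), hAB⟩)
  exact ⟨A, B, hAB, fun A' B' h' ↦ not_lt.mp (hmin (A', B') h')⟩

end Barricade

/-- a graph containing a `μ`-barricade contains a `μ`-obstruction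
of type I as a subgraph. -/
theorem stmt2 {V : Type u} (G : SimpleGraph V) (μ : Cardinal.{u}) (hμ : ℵ₀ ≤ μ)
    (h : HasBarricade G μ) : HasTypeIObstruction G μ := by
  obtain ⟨A, B, hAB, hmin⟩ := exists_isBarricade_forall_mk_le h
  obtain ⟨B₁, -, hB₁, hAB₁⟩ := hAB.exists_subset_mk_eq_succ
  obtain ⟨A₀, hA₀, B₀, -, hAB₀, hB₀, hA₀B₀⟩ :=
    hAB₁.exists_subbarricade_forall_mk_neighborSet_eq (hμ.trans hAB.le_mk_left) hB₁
  have hA₀_card : #A₀ = #A := le_antisymm (mk_le_mk_of_subset hA₀) (hmin A₀ B₀ hAB₀)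
  exact ⟨A₀, B₀, #A, hAB₀.1, hA₀_card ▸ hAB₀.le_mk_left, hA₀_card, hB₀, hAB₀.2.2, hA₀B₀⟩
end

section
/- Let μ be an infinite cardinal and let ϖ be the least infinite cardinal whose cofinality differs from cf(μ) (so ϖ is ω or ω₁). If ⟨X_i : i < ϖ⟩ is a ⊆-increasing sequence of robust vertex sets in a graph G, then ⋃_{i<ϖ} X_i is robust. -/
open Cardinal

universe u v

/-!
Fix `v` outside the union. The sets `N(v) ∩ X i` form a `⊆`-chain of length `ϖ` of sets of
size `< μ`, and `ϖ ∈ {ℵ₀, ℵ₁}` is regular with `ϖ ≠ cf μ`. If `μ < ϖ`, any `μ` elements of the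
union already lie in a single member of the chain. Otherwise `ϖ < μ`, and the sizes of the
members are bounded by some `ν < μ`: for `ϖ < cf μ` take their supremum, and for `cf μ < ϖ` a
cofinal `cf μ`-sequence below `μ` would be exceeded at a single stage of the chain. Then the
union has size at most `ϖ * ν < μ`.
-/

open Set

theorem exists_lt_forall_le_of_card_lt_cof {o : Ordinal.{u}} {μ : Cardinal.{u}}
    {c : Ordinal.{u} → Cardinal.{u}} (ho : o.card < μ.ord.cof) (hc : ∀ i < o, c i < μ) :
    ∃ ν < μ, ∀ i < o, c i ≤ ν :=
  ⟨⨆ i : Iio o, c i,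
    lift_iSup_lt_of_lt_cof_ord (by rw [← lift_lt.{u, u + 1}] at ho; simpa using ho)
      fun i => hc i i.2,
    fun i hi => le_ciSup bddAbove_of_small (⟨i, hi⟩ : Iio o)⟩

theorem exists_lt_forall_le_of_cof_lt_cof {o : Ordinal.{u}} {μ : Cardinal.{u}}
    {c : Ordinal.{u} → Cardinal.{u}} (hc_mono : MonotoneOn c (Iio o))
    (hcof : μ.ord.cof < o.cof) (hc : ∀ i < o, c i < μ) : ∃ ν < μ, ∀ i < o, c i ≤ ν := by
  by_contra! hunb
  obtain ⟨s, hs_cof, hs_card⟩ := Order.exists_cof_eq (Iio μ.ord)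
  have hpick : ∀ x : s, ∃ i < o, (x : Ordinal).card < c i := fun x =>
    hunb _ (Cardinal.lt_ord.1 x.1.2)
  choose idx hidx_lt hidx using hpick
  have hj : ⨆ x, idx x < o := Ordinal.lift_iSup_lt_of_lt_cof (by
    rw [← lift_lt.{u, u + 1}] at hcof; simpa [hs_card, Ordinal.cof_Iio] using hcof) hidx_lt
  obtain ⟨x, hxs, hx⟩ := hs_cof ⟨(c (⨆ x, idx x)).ord, ord_lt_ord.2 (hc _ hj)⟩
  have hjx : c (⨆ x, idx x) ≤ (x : Ordinal).card := by
    simpa using Ordinal.card_le_card (Subtype.mk_le_mk.1 hx)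
  have hxj : c (idx ⟨x, hxs⟩) ≤ c (⨆ x, idx x) :=
    hc_mono (hidx_lt _) hj (le_ciSup ⟨o, forall_mem_range.2 fun x => (hidx_lt x).le⟩ _)
  exact (hidx ⟨x, hxs⟩).not_ge (hxj.trans hjx)

section ChainUnion

variable {V : Type u}

theorem exists_subset_of_mk_lt_cof {o : Ordinal.{u}} {A : Ordinal.{u} → Set V}
    (hA : MonotoneOn A (Iio o)) {S : Set V} (hS : S ⊆ ⋃ i ∈ Iio o, A i) (hSo : #S < o.cof) :
    ∃ j < o, S ⊆ A j := by
  have hidx : ∀ s : S, ∃ i < o, (s : V) ∈ A i := fun s => by simpa using hS s.2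
  choose idx hidx_lt hmem using hidx
  have hj : ⨆ s, idx s < o := Ordinal.iSup_lt_of_lt_cof hSo hidx_lt
  exact ⟨_, hj, fun s hs =>
    hA (hidx_lt ⟨s, hs⟩) hj (Ordinal.le_iSup idx ⟨s, hs⟩) (hmem ⟨s, hs⟩)⟩

theorem mk_biUnion_lt_of_lt_cof {o : Ordinal.{u}} {A : Ordinal.{u} → Set V}
    (hA : MonotoneOn A (Iio o)) {μ : Cardinal.{u}} (hμo : μ < o.cof)
    (hsmall : ∀ i < o, #(A i) < μ) : #(⋃ i ∈ Iio o, A i) < μ := by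
  by_contra! h
  obtain ⟨S, hSU, hSμ⟩ := Cardinal.le_mk_iff_exists_subset.1 h
  obtain ⟨j, hj, hSj⟩ := exists_subset_of_mk_lt_cof hA hSU (hSμ ▸ hμo)
  exact (hsmall j hj).not_ge (hSμ ▸ mk_le_mk_of_subset hSj)

theorem mk_biUnion_Iio_le {o : Ordinal.{u}} {A : Ordinal.{u} → Set V} {ν : Cardinal.{u}}
    (hν : ∀ i < o, #(A i) ≤ ν) : #(⋃ i ∈ Iio o, A i) ≤ o.card * ν := by
  have h := mk_biUnion_le_lift A (Iio o)
  rw [mk_Iio_ordinal] at h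
  have hsup : ⨆ i : Iio o, lift.{u + 1} #(A i) ≤ lift.{u + 1} ν :=
    ciSup_le' fun i => lift_le.2 (hν i i.2)
  have := h.trans (mul_le_mul_right hsup _)
  rwa [lift_lift, ← lift_mul, lift_le] at this

theorem mk_biUnion_lt_of_isRegular {κ μ : Cardinal.{u}} (hμ : ℵ₀ ≤ μ)
    (hκ : κ.IsRegular) (hκμ : κ ≠ μ.ord.cof) {A : Ordinal.{u} → Set V}
    (hA : MonotoneOn A (Iio κ.ord)) (hsmall : ∀ i < κ.ord, #(A i) < μ) :
    #(⋃ i ∈ Iio κ.ord, A i) < μ := by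
  rcases lt_or_ge μ κ with hμκ | hκ_le
  · exact mk_biUnion_lt_of_lt_cof hA (by rwa [hκ.cof_ord]) hsmall
  have hκ_lt : κ < μ := hκ_le.lt_of_ne fun h => hκμ (by rw [← h, hκ.cof_ord])
  obtain ⟨ν, hνμ, hν⟩ : ∃ ν < μ, ∀ i < κ.ord, #(A i) ≤ ν := by
    rcases hκμ.lt_or_gt with h | h
    · exact exists_lt_forall_le_of_card_lt_cof (by rwa [card_ord]) hsmall
    · exact exists_lt_forall_le_of_cof_lt_cof
        (fun i hi j hj hij => mk_le_mk_of_subset (hA hi hj hij)) (by rwa [hκ.cof_ord]) hsmall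
  calc #(⋃ i ∈ Iio κ.ord, A i) ≤ κ.ord.card * ν := mk_biUnion_Iio_le hν
    _ < μ := by rw [card_ord]; exact mul_lt_of_lt hμ hκ_lt hνμ

end ChainUnion

theorem isRegular_of_le_aleph_one {c : Cardinal} (h₀ : ℵ₀ ≤ c) (h₁ : c ≤ ℵ₁) : c.IsRegular := by
  rcases h₀.eq_or_lt with rfl | h
  · exact isRegular_aleph0
  · rw [le_antisymm h₁ (succ_aleph0 ▸ Order.succ_le_of_lt h)]
    exact isRegular_aleph_one

/-- with `ϖ` the least infinite cardinal whose cofinality differs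
from `cf(μ)`, the union of a `⊆`-increasing `ϖ`-sequence of robust sets is robust. -/
theorem stmt7 {V : Type u} (G : SimpleGraph V) (μ ϖ : Cardinal.{u}) (hμ : ℵ₀ ≤ μ)
    (hϖ : ℵ₀ ≤ ϖ) (hcof : ϖ.ord.cof ≠ μ.ord.cof)
    (hleast : ∀ ν : Cardinal.{u}, ℵ₀ ≤ ν → ν.ord.cof ≠ μ.ord.cof → ϖ ≤ ν)
    (X : Ordinal.{u} → Set V)
    (hmono : ∀ i j : Ordinal.{u}, i ≤ j → j < ϖ.ord → X i ⊆ X j)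
    (hrob : ∀ i < ϖ.ord, Robust G μ (X i)) :
    Robust G μ (⋃ i ∈ Set.Iio ϖ.ord, X i) := by
  have hϖ₁ : ϖ ≤ ℵ₁ := by
    by_cases h : μ.ord.cof = ℵ₀
    · exact hleast ℵ₁ aleph0_lt_aleph_one.le
        (by rw [isRegular_aleph_one.cof_ord, h]; exact aleph0_lt_aleph_one.ne')
    · exact (hleast ℵ₀ le_rfl (by rw [isRegular_aleph0.cof_ord]; exact Ne.symm h)).trans
        aleph0_lt_aleph_one.le
  have hϖreg := isRegular_of_le_aleph_one hϖ hϖ₁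
  intro v hv
  rw [inter_iUnion₂]
  exact mk_biUnion_lt_of_isRegular hμ hϖreg (hϖreg.cof_ord ▸ hcof)
    (fun i _ j hj hij => inter_subset_inter_right _ (hmono i j hij hj))
    fun i hi => hrob i hi v fun hvi => hv (mem_biUnion hi hvi)
end

section
/- Let κ be a regular uncountable cardinal and G a graph with vertex set κ. If the set T = {α < κ : some vertex β ≥ α has at least μ neighbours in α} is stationary in κ, then G is isomorphic to a μ-ladder, i.e., there is a permutation π of κ and a stationary set S ⊆ κ such that in the graph π(G), every α ∈ S has at least μ neighbours below α. -/
open Cardinal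

universe u v

/-!
Choose for every `α ∈ T` a vertex `g α ≥ α` with at least `μ` neighbours below `α`. The
closure points of `g` form a club, so the set `S` of closure points lying in `T` is stationary.
On `S` the map `g` is injective and lands in `S` only at fixed points, so the involution
exchanging each `α ∈ S` with `g α` is a permutation of `κ`. It maps no ordinal below a closure
point `γ` to or above `γ`; hence it turns the `μ` neighbours of `g α` below `α` into
neighbours of `α` below `α`.
-/

open Ordinal Set Function

section Club

variable {C D : Set Ordinal.{v}} {o : Ordinal.{v}} {κ : Cardinal.{v}}

theorem IsClubIn.exists_gt (hC : IsClubIn C o) (ho : Order.IsSuccLimit o) {a : Ordinal.{v}}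
    (ha : a < o) : ∃ c ∈ C, a < c ∧ c < o := by
  obtain ⟨c, hc, hac, hco⟩ := hC.1 (Order.succ a) (ho.succ_lt ha)
  exact ⟨c, hc, Order.succ_le_iff.1 hac, hco⟩

theorem IsClubIn.mem_of_forall_exists_gt (hC : IsClubIn C o) {γ : Ordinal.{v}} (hγo : γ < o)
    (hγ : γ ≠ 0) (hcof : ∀ x < γ, ∃ c ∈ C, x < c ∧ c < γ) : γ ∈ C := by
  refine hC.2 γ hγo hγ <|
    le_antisymm (csSup_le' fun c hc => hc.2.le) (le_of_forall_lt fun x hx => ?_)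
  obtain ⟨c, hc, hxc, hcγ⟩ := hcof x hx
  exact lt_csSup_of_lt ⟨γ, fun _ h => h.2.le⟩ ⟨hc, hcγ⟩ hxc

theorem exists_gt_forall_lt_lt (hreg : κ.IsRegular) (hunc : ℵ₀ < κ)
    {f : Ordinal.{v} → Ordinal.{v}} (hf : ∀ x < κ.ord, f x < κ.ord) {a : Ordinal.{v}}
    (ha : a < κ.ord) :
    ∃ γ, a < γ ∧ γ < κ.ord ∧ ∀ x < γ, f x < γ := by
  set F : Ordinal.{v} → Ordinal.{v} := fun x => ⨆ y : Iio x, f y + 1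
  have hF : ∀ x < κ.ord, F x < κ.ord := fun x hx => by
    refine lift_iSup_add_one_lt_of_lt_cof ?_ fun y => hf y (y.2.trans hx)
    rw [← lift_cof, hreg.cof_ord, Cardinal.mk_Iio_ordinal, Cardinal.lift_lift, Cardinal.lift_lt]
    exact lt_ord.1 hx
  have hfF : ∀ x, ∀ y < x, f y < F x := fun x y hy =>
    (Order.lt_add_one_iff.2 le_rfl).trans_le (Ordinal.le_iSup (fun y : Iio x => f y + 1) ⟨y, hy⟩)
  refine ⟨nfp F (a + 1), (Order.lt_add_one_iff.2 le_rfl).trans_le (le_nfp F _),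
    nfp_lt_ord_of_isRegular hreg hunc.ne' hF ((isSuccLimit_ord hreg.aleph0_le).add_one_lt ha),
    fun x hx => ?_⟩
  obtain ⟨n, hn⟩ := lt_nfp_iff.1 hx
  have hiter : F (F^[n] (a + 1)) ≤ nfp F (a + 1) := by
    simpa only [iterate_succ_apply'] using iterate_le_nfp F _ (n + 1)
  exact (hfF _ x hn).trans_le hiter

theorem isClubIn_setOf_forall_lt_lt (hreg : κ.IsRegular) (hunc : ℵ₀ < κ)
    {f : Ordinal.{v} → Ordinal.{v}} (hf : ∀ x < κ.ord, f x < κ.ord) :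
    IsClubIn {γ | ∀ x < γ, f x < γ} κ.ord := by
  refine ⟨fun a ha => ?_, fun a _ _ hsup x hx => ?_⟩
  · obtain ⟨γ, haγ, hγκ, hγ⟩ := exists_gt_forall_lt_lt hreg hunc hf ha
    exact ⟨γ, hγ, haγ.le, hγκ⟩
  · obtain ⟨γ, ⟨hγ, hγa⟩, hxγ⟩ := exists_lt_of_lt_csSup' (hsup.symm ▸ hx)
    exact (hγ x hxγ).trans hγa

theorem IsClubIn.inter (hreg : κ.IsRegular) (hunc : ℵ₀ < κ) (hC : IsClubIn C κ.ord)
    (hD : IsClubIn D κ.ord) : IsClubIn (C ∩ D) κ.ord := by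
  have hlim := isSuccLimit_ord hreg.aleph0_le
  refine ⟨fun a ha => ?_, fun a ha ha0 hsup => ?_⟩
  · choose! nextC hnextC using fun x (hx : x < κ.ord) => hC.exists_gt hlim hx
    choose! nextD hnextD using fun x (hx : x < κ.ord) => hD.exists_gt hlim hx
    obtain ⟨γ, haγ, hγκ, hγ⟩ := exists_gt_forall_lt_lt hreg hunc
      (f := fun x => max (nextC x) (nextD x))
      (fun x hx => max_lt (hnextC x hx).2.2 (hnextD x hx).2.2) ha
    have hγ0 : γ ≠ 0 := (zero_le.trans_lt haγ).ne'
    refine ⟨γ, ⟨hC.mem_of_forall_exists_gt hγκ hγ0 fun x hx => ?_,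
      hD.mem_of_forall_exists_gt hγκ hγ0 fun x hx => ?_⟩, haγ.le, hγκ⟩
    · obtain ⟨hc, hxc, -⟩ := hnextC x (hx.trans hγκ)
      exact ⟨nextC x, hc, hxc, (le_max_left _ _).trans_lt (hγ x hx)⟩
    · obtain ⟨hd, hxd, -⟩ := hnextD x (hx.trans hγκ)
      exact ⟨nextD x, hd, hxd, (le_max_right _ _).trans_lt (hγ x hx)⟩
  · have hcof : ∀ x < a, ∃ c ∈ C ∩ D, x < c ∧ c < a := fun x hx => by
      obtain ⟨c, ⟨hc, hca⟩, hxc⟩ := exists_lt_of_lt_csSup' (hsup.symm ▸ hx)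
      exact ⟨c, hc, hxc, hca⟩
    exact ⟨hC.mem_of_forall_exists_gt ha ha0 fun x hx =>
        (hcof x hx).imp fun _ h => ⟨h.1.1, h.2⟩,
      hD.mem_of_forall_exists_gt ha ha0 fun x hx => (hcof x hx).imp fun _ h => ⟨h.1.2, h.2⟩⟩

theorem IsStationaryIn.inter_isClubIn {S : Set Ordinal.{v}} (hreg : κ.IsRegular)
    (hunc : ℵ₀ < κ) (hS : IsStationaryIn S κ.ord) (hC : IsClubIn C κ.ord) :
    IsStationaryIn (S ∩ C) κ.ord :=
  fun D hD => by
    obtain ⟨α, ⟨hαS, hαC, hαD⟩, hα⟩ := hS (C ∩ D) (hC.inter hreg hunc hD)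
    exact ⟨α, ⟨⟨hαS, hαC⟩, hαD⟩, hα⟩

end Club

theorem exists_involutive_eqOn {α : Type*} {S : Set α} {g : α → α} (hinj : InjOn g S)
    (hfix : ∀ a ∈ S, g a ∈ S → g a = a) :
    ∃ π : α → α, Involutive π ∧ EqOn π g S ∧ ∀ x ∉ S, π x = x ∨ (π x ∈ S ∧ g (π x) = x) := by
  classical
  set π : α → α := fun x => if x ∈ S then g x else if h : ∃ a ∈ S, g a = x then h.choose else x
  have hπS : EqOn π g S := fun x hx => if_pos hx
  have hπimage : ∀ x ∉ S, (h : ∃ a ∈ S, g a = x) → π x ∈ S ∧ g (π x) = x := fun x hx h => by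
    simpa only [π, if_neg hx, dif_pos h] using h.choose_spec
  have hπfix : ∀ x ∉ S, (¬∃ a ∈ S, g a = x) → π x = x := fun x hx h => by
    simp only [π, if_neg hx, dif_neg h]
  have hπ : ∀ x ∉ S, π x = x ∨ (π x ∈ S ∧ g (π x) = x) := fun x hx =>
    (em _).elim (fun h => Or.inr (hπimage x hx h)) (fun h => Or.inl (hπfix x hx h))
  refine ⟨π, fun x => ?_, hπS, hπ⟩
  by_cases hx : x ∈ S
  · rw [hπS hx]
    by_cases hgx : g x ∈ S
    · rw [hfix x hx hgx, hπS hx, hfix x hx hgx]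
    · obtain ⟨hS, hg⟩ := hπimage (g x) hgx ⟨x, hx, rfl⟩
      exact hinj hS hx hg
  · rcases hπ x hx with h | ⟨hS, hg⟩
    · rw [h, h]
    · rw [hπS hS, hg]

theorem exists_bijOn_Iio_swapping {o : Ordinal.{v}} {S : Set Ordinal.{v}}
    {g : Ordinal.{v} → Ordinal.{v}}
    (hSo : S ⊆ Iio o) (hgo : ∀ α ∈ S, g α < o) (hle : ∀ α ∈ S, α ≤ g α)
    (hclosed : ∀ α ∈ S, ∀ γ ∈ S, α < γ → g α < γ) :
    ∃ π : Ordinal.{v} → Ordinal.{v}, BijOn π (Iio o) (Iio o) ∧ (∀ α ∈ S, π (g α) = α) ∧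
      ∀ γ ∈ S, ∀ β < γ, π β < γ := by
  have hinj : InjOn g S := fun α hα α' hα' h => by
    by_contra hne
    rcases lt_or_gt_of_ne hne with hlt | hlt
    · exact (hclosed α hα α' hα' hlt).not_ge (h ▸ hle α' hα')
    · exact (hclosed α' hα' α hα hlt).not_ge (h ▸ hle α hα)
  have hfix : ∀ α ∈ S, g α ∈ S → g α = α := fun α hα hgα =>
    ((hle α hα).lt_or_eq.resolve_left fun hlt => (hclosed α hα _ hgα hlt).false).symm
  obtain ⟨π, hinv, hπg, hπ⟩ := exists_involutive_eqOn hinj hfix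
  have hmaps : MapsTo π (Iio o) (Iio o) := fun x hx => by
    by_cases hxS : x ∈ S
    · exact hπg hxS ▸ hgo x hxS
    · rcases hπ x hxS with h | ⟨hS, -⟩
      · rwa [h]
      · exact hSo hS
  refine ⟨π, InvOn.bijOn ⟨fun x _ => hinv x, fun x _ => hinv x⟩ hmaps hmaps,
    fun α hα => by rw [← hπg hα, hinv], fun γ hγ β hβ => ?_⟩
  by_cases hβS : β ∈ S
  · exact hπg hβS ▸ hclosed β hβS γ hγ hβ
  · rcases hπ β hβS with h | ⟨hS, hg⟩
    · rwa [h]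
    · exact (hle _ hS).trans_lt (by rwa [hg])

theorem stmt11_general (μ κ : Cardinal.{0})
    (hreg : κ.IsRegular) (hunc : ℵ₀ < κ)
    (G : SimpleGraph Ordinal.{0})
    (hstat : IsStationaryIn {α | α < κ.ord ∧ ∃ β, α ≤ β ∧ β < κ.ord ∧
      Cardinal.lift.{1} μ ≤ #(G.neighborSet β ∩ Set.Iio α : Set Ordinal.{0})} κ.ord) :
    ∃ π : Ordinal.{0} → Ordinal.{0},
      Set.BijOn π (Set.Iio κ.ord) (Set.Iio κ.ord) ∧
      ∃ S : Set Ordinal.{0}, IsStationaryIn S κ.ord ∧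
        ∀ α ∈ S, Cardinal.lift.{1} μ ≤
          #{β : Ordinal.{0} | β < α ∧ ∃ a b, a < κ.ord ∧ b < κ.ord ∧
            G.Adj a b ∧ π a = α ∧ π b = β} := by
  set T := {α | α < κ.ord ∧ ∃ β, α ≤ β ∧ β < κ.ord ∧
    Cardinal.lift.{1} μ ≤ #(G.neighborSet β ∩ Set.Iio α : Set Ordinal.{0})}
  have hwitness : ∀ α < κ.ord, ∃ β, α ≤ β ∧ β < κ.ord ∧
      (α ∈ T → Cardinal.lift.{1} μ ≤ #(G.neighborSet β ∩ Iio α : Set Ordinal.{0})) :=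
    fun α hα => by
      by_cases h : α ∈ T
      · exact h.2.imp fun _ hβ => ⟨hβ.1, hβ.2.1, fun _ => hβ.2.2⟩
      · exact ⟨α, le_rfl, hα, fun h' => absurd h' h⟩
  choose! g hle hgκ hdeg using hwitness
  set S := T ∩ {γ | ∀ x < γ, g x < γ}
  have hS : IsStationaryIn S κ.ord :=
    hstat.inter_isClubIn hreg hunc (isClubIn_setOf_forall_lt_lt hreg hunc hgκ)
  obtain ⟨π, hπ, hπg, hπlt⟩ := exists_bijOn_Iio_swapping (S := S) (g := g) (fun α hα => hα.1.1)
    (fun α hα => hgκ α hα.1.1) (fun α hα => hle α hα.1.1) fun α _ γ hγ hαγ => hγ.2 α hαγ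
  refine ⟨π, hπ, S, hS, fun α hα => ?_⟩
  have hακ : α < κ.ord := hα.1.1
  calc Cardinal.lift.{1} μ ≤ #(G.neighborSet (g α) ∩ Iio α : Set Ordinal.{0}) := hdeg α hακ hα.1
    _ = #(π '' (G.neighborSet (g α) ∩ Iio α)) :=
      (mk_image_eq_of_injOn _ _ (hπ.injOn.mono fun b hb => hb.2.trans hακ)).symm
    _ ≤ _ := mk_le_mk_of_subset <| by
      rintro _ ⟨b, ⟨hb, hbα⟩, rfl⟩
      exact ⟨hπlt α hα b hbα, g α, b, hgκ α hακ, hbα.trans hακ, hb, hπg α hα, rfl⟩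

/-- second case of the regular-cardinal argument. If
`T = {α < κ : some β ≥ α has ≥ μ neighbours below α}` is stationary, then `G`
is isomorphic (via a permutation `π` of `κ`) to a `μ`-ladder. -/
theorem stmt11 (μ κ : Cardinal.{0}) (hμ : ℵ₀ ≤ μ) (hμκ : μ < κ)
    (hreg : κ.IsRegular) (hunc : ℵ₀ < κ)
    (G : SimpleGraph Ordinal.{0}) (hsupp : ∀ a b, G.Adj a b → a < κ.ord ∧ b < κ.ord)
    (hstat : IsStationaryIn {α | α < κ.ord ∧ ∃ β, α ≤ β ∧ β < κ.ord ∧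
      Cardinal.lift.{1} μ ≤ #(G.neighborSet β ∩ Set.Iio α : Set Ordinal.{0})} κ.ord) :
    ∃ π : Ordinal.{0} → Ordinal.{0},
      Set.BijOn π (Set.Iio κ.ord) (Set.Iio κ.ord) ∧
      ∃ S : Set Ordinal.{0}, IsStationaryIn S κ.ord ∧
        ∀ α ∈ S, Cardinal.lift.{1} μ ≤
          #{β : Ordinal.{0} | β < α ∧ ∃ a b, a < κ.ord ∧ b < κ.ord ∧
            G.Adj a b ∧ π a = α ∧ π b = β} :=
  stmt11_general μ κ hreg hunc G hstat
end

section
/- Every μ-obstruction of type I either contains a K_μ subgraph or, for every positive integer k, contains an induced K_{k,ω}. -/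
open Cardinal

universe u v

/-!
Every vertex of `B` has at least `μ ≥ ℵ₀` neighbours in `A`, so it can pick `k` of them. There are
only `|[A]^{<ω}| = λ < λ⁺ = |B|` finite subsets of `A`, so one `k`-set is picked by infinitely many
vertices of `B`; since the graph is bipartite, both sides of the resulting `K_{k,ω}` are independent.
Thus the second alternative always holds.
-/

theorem Cardinal.exists_finset_card_eq_infinite_setOf_forall_rel {α β : Type u}
    (r : β → α → Prop) (hr : ∀ b, {a | r b a}.Infinite) (hαβ : #α < #β) (k : ℕ) :
    ∃ s : Finset α, s.card = k ∧ {b | ∀ a ∈ s, r b a}.Infinite := by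
  obtain ⟨b₀⟩ : Nonempty β := mk_ne_zero_iff.mp (ne_bot_of_gt hαβ)
  have : Infinite α := Set.infinite_univ_iff.mp ((hr b₀).mono (Set.subset_univ _))
  have : Infinite β := infinite_iff.mpr ((infinite_iff.mp ‹Infinite α›).trans hαβ.le)
  choose f hf hcard using fun b => (hr b).exists_subset_card_eq k
  rw [← mk_finset_of_infinite α] at hαβ
  obtain ⟨s, hs⟩ := exists_infinite_fiber f hαβ
  obtain ⟨b, hb⟩ := (Set.infinite_coe_iff.mp hs).nonempty
  refine ⟨s, hb ▸ hcard b, (Set.infinite_coe_iff.mp hs).mono fun b' hb' a ha => hf b' ?_⟩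
  rwa [show f b' = s from hb']

namespace SimpleGraph

variable {V : Type u} (G : SimpleGraph V)

theorem exists_complete_bipartite_finite_countable_of_mk_lt {A B : Set V} (hAB : #A < #B)
    (hB : ∀ b ∈ B, (G.neighborSet b ∩ A).Infinite) (k : ℕ) :
    ∃ S ⊆ A, ∃ T ⊆ B, #S = k ∧ #T = ℵ₀ ∧ ∀ a ∈ S, ∀ b ∈ T, G.Adj a b := by
  have hr (b : B) : {a : A | G.Adj b a}.Infinite :=
    ((hB b b.2).preimage (by simp)).mono fun _ ha => ha.1
  obtain ⟨s, hs, hT⟩ := Cardinal.exists_finset_card_eq_infinite_setOf_forall_rel _ hr hAB k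
  obtain ⟨T, hT_sub, hT_card⟩ := le_mk_iff_exists_subset.mp
    (infinite_iff.mp (hT.image Subtype.val_injective.injOn).to_subtype)
  refine ⟨Subtype.val '' (s : Set A), by simp, T, hT_sub.trans (by simp), ?_, hT_card, ?_⟩
  · rw [mk_image_eq Subtype.val_injective, Finset.coe_sort_coe, mk_coe_finset, hs]
  · rintro _ ⟨a, ha, rfl⟩ _ hb
    obtain ⟨b, hb_adj, rfl⟩ := hT_sub hb
    exact (hb_adj a ha).symm

theorem isIndepSet_of_subset_of_forall_adj {A B S : Set V} (hAB : Disjoint A B)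
    (hbip : ∀ a b, G.Adj a b → (a ∈ A ∧ b ∈ B) ∨ (a ∈ B ∧ b ∈ A)) (hS : S ⊆ A) :
    G.IsIndepSet S := by
  intro a ha a' ha' _ hadj
  rcases hbip a a' hadj with ⟨-, h⟩ | ⟨h, -⟩
  · exact hAB.notMem_of_mem_left (hS ha') h
  · exact hAB.notMem_of_mem_left (hS ha) h

end SimpleGraph

/-- every `μ`-obstruction of type I contains a `K_μ` subgraph or,
for every positive `k`, an induced `K_{k,ω}`. -/
theorem stmt14 {V : Type u} (G : SimpleGraph V) (μ : Cardinal.{u}) (hμ : ℵ₀ ≤ μ)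
    (h : IsTypeIObstruction G μ) :
    HasCompleteSubgraph G μ ∨ ∀ k : ℕ, 0 < k → HasInducedKkOmega G k := by
  obtain ⟨A, B, lam, hAB, -, hbip, -, hA, hB, hB_nbr, -⟩ := h
  refine Or.inr fun k _ => ?_
  have hB_inf (b) (hb : b ∈ B) : (G.neighborSet b ∩ A).Infinite :=
    Set.infinite_coe_iff.mp (infinite_iff.mpr (hμ.trans (hB_nbr b hb)))
  obtain ⟨S, hSA, T, hTB, hS, hT, hST⟩ :=
    G.exists_complete_bipartite_finite_countable_of_mk_lt
      (by rw [hA, hB]; exact Order.lt_succ lam) hB_inf k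
  exact ⟨S, T, hAB.mono hSA hTB, hS, hT, hST,
    G.isIndepSet_of_subset_of_forall_adj hAB hbip hSA,
    G.isIndepSet_of_subset_of_forall_adj hAB.symm (fun a b h => (hbip a b h).symm) hTB⟩
end

section
/- Every μ-obstruction of type II either contains a K_μ subgraph or, for every positive integer k, contains an induced K_{k,ω}. -/
open Cardinal

universe u v

/-!
For `α ∈ T_G` the set `N(α) ∩ α` has size `μ`, so if `G` has no `K_μ`, the Dushnik–Erdős–Miller
theorem `μ → (μ, ω)²` gives an infinite independent sequence `e_α` in it. Pressing down `k` times
(Fodor's lemma) yields a stationary `S ⊆ T_G` on which `e_α 0, …, e_α (k - 1)` do not depend on `α`;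
these `k` independent vertices lie below every `α ∈ S` and are adjacent to it. As `|S| = κ > μ`,
Dushnik–Erdős–Miller applied to `S` gives an infinite independent `B ⊆ S`, which together with the
`k` common neighbours spans an induced `K_{k,ω}`.
-/

universe w

open Set

namespace IsClubIn

variable {o : Ordinal.{v}}

theorem univ : IsClubIn univ o :=
  ⟨fun a ha => ⟨a, trivial, le_rfl, ha⟩, fun _ _ _ _ => trivial⟩

theorem Ici {a : Ordinal.{v}} (ha : a < o) : IsClubIn (Ici a) o := by
  refine ⟨fun x hx => ?_, fun x _ hx0 hsup => ?_⟩
  · rcases le_total a x with h | h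
    · exact ⟨x, h, le_rfl, hx⟩
    · exact ⟨a, mem_Ici.2 le_rfl, h, ha⟩
  · by_contra hax
    rw [Ici_inter_Iio, Ico_eq_empty fun h => hax h.le, csSup_empty] at hsup
    exact hx0 hsup.symm

end IsClubIn

theorem Ordinal.csSup_inter_Iio_eq {C : Set Ordinal.{v}} {a : Ordinal.{v}}
    (h : ∀ c < a, ∃ d ∈ C, c < d ∧ d < a) : sSup (C ∩ Iio a) = a := by
  refine le_antisymm (csSup_le' fun y hy => hy.2.le) (le_of_forall_lt fun c hc => ?_)
  obtain ⟨d, hdC, hcd, hda⟩ := h c hc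
  exact hcd.trans_le (le_csSup ⟨a, fun y hy => hy.2.le⟩ ⟨hdC, hda⟩)

theorem Ordinal.lift_cof_le_mk_of_forall_exists_le {o : Ordinal.{v}} {X : Set Ordinal.{v}}
    (hX : ∀ x ∈ X, x < o) (hu : ∀ a < o, ∃ x ∈ X, a ≤ x) :
    Cardinal.lift.{v + 1} o.cof ≤ #X := by
  by_contra! h
  rw [Ordinal.lift_cof] at h
  obtain ⟨x, hx, hle⟩ := hu _ (Ordinal.sSup_add_one_lt_of_lt_cof h hX)
  have : x + 1 ≤ sSup ((· + 1) '' X) :=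
    le_csSup ⟨o, by rintro _ ⟨y, hy, rfl⟩; exact Order.add_one_le_of_lt (hX y hy)⟩
      ⟨x, hx, rfl⟩
  exact (Order.lt_add_one_iff.2 le_rfl).not_ge (this.trans hle)

namespace IsStationaryIn

variable {S : Set Ordinal.{v}} {o : Ordinal.{v}}

theorem exists_mem_ge (hS : IsStationaryIn S o) {a : Ordinal.{v}} (ha : a < o) :
    ∃ x ∈ S, a ≤ x ∧ x < o := by
  obtain ⟨x, ⟨hxS, hax⟩, hxo⟩ := hS _ (IsClubIn.Ici ha)
  exact ⟨x, hxS, hax, hxo⟩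

theorem exists_mem_lt (hS : IsStationaryIn S o) : ∃ x ∈ S, x < o := by
  obtain ⟨x, ⟨hxS, -⟩, hxo⟩ := hS _ IsClubIn.univ
  exact ⟨x, hxS, hxo⟩

theorem lift_le_mk {κ : Cardinal.{v}} (hκ : κ.IsRegular) (hS : IsStationaryIn S κ.ord) :
    Cardinal.lift.{v + 1} κ ≤ #S := by
  have := Ordinal.lift_cof_le_mk_of_forall_exists_le (X := S ∩ Iio κ.ord) (fun x hx => hx.2)
    fun a ha => by
      obtain ⟨x, hxS, hax, hxo⟩ := hS.exists_mem_ge ha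
      exact ⟨x, ⟨hxS, hxo⟩, hax⟩
  rw [hκ.cof_ord] at this
  exact this.trans (mk_le_mk_of_subset inter_subset_left)

end IsStationaryIn

theorem Cardinal.IsRegular.iSup_lt_ord {κ : Cardinal.{v}} (hκ : κ.IsRegular) {ι : Type w}
    {f : ι → Ordinal.{v}} (hι : Cardinal.lift.{v} #ι < Cardinal.lift.{w} κ)
    (hf : ∀ i, f i < κ.ord) : ⨆ i, f i < κ.ord :=
  Ordinal.lift_iSup_lt_of_lt_cof (by rwa [← Ordinal.lift_cof, hκ.cof_ord]) hf

def diagInter (C : Ordinal.{v} → Set Ordinal.{v}) : Set Ordinal.{v} :=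
  {β | ∀ γ < β, β ∈ C γ}

section DiagInter

variable {C : Ordinal.{v} → Set Ordinal.{v}}

theorem diagInter_mem_of_sSup_eq {o a : Ordinal.{v}} (hC : ∀ γ < o, IsClubIn (C γ) o)
    (ha : a < o) (ha0 : a ≠ 0) (hsup : sSup (diagInter C ∩ Iio a) = a) : a ∈ diagInter C := by
  intro γ hγ
  refine (hC γ (hγ.trans ha)).2 a ha ha0 (Ordinal.csSup_inter_Iio_eq fun c hc => ?_)
  obtain ⟨d, ⟨hdD, hda⟩, hcd⟩ :=
    exists_lt_of_lt_csSup' (hsup.symm ▸ max_lt hc hγ : max c γ < sSup (diagInter C ∩ Iio a))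
  exact ⟨d, hdD γ ((le_max_right _ _).trans_lt hcd), (le_max_left _ _).trans_lt hcd, hda⟩

variable {κ : Cardinal.{v}}

theorem exists_forall_inter_Ico_nonempty (hκ : κ.IsRegular)
    (hC : ∀ γ < κ.ord, IsClubIn (C γ) κ.ord) {x : Ordinal.{v}} (hx : x < κ.ord) :
    ∃ y, x < y ∧ y < κ.ord ∧ ∀ γ < x, (C γ ∩ Ico x y).Nonempty := by
  have hc (γ : Iio x) : ∃ c ∈ C γ, x ≤ c ∧ c < κ.ord := (hC γ (γ.2.trans hx)).1 x hx
  choose c hcC hxc hco using hc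
  have hcard : Cardinal.lift.{v} #(Iio x) < Cardinal.lift.{v + 1} κ := by
    rw [Cardinal.mk_Iio_ordinal, Cardinal.lift_lift, Cardinal.lift_lt]
    exact Cardinal.lt_ord.1 hx
  have hsup : ⨆ γ, c γ < κ.ord := hκ.iSup_lt_ord hcard hco
  refine ⟨Order.succ (max x (⨆ γ, c γ)), ?_, ?_,
    fun γ hγ => ⟨c ⟨γ, hγ⟩, hcC ⟨γ, hγ⟩, hxc _, ?_⟩⟩
  · exact Order.lt_succ_of_le (le_max_left _ _)
  · exact (Cardinal.isSuccLimit_ord hκ.aleph0_le).succ_lt (max_lt hx hsup)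
  · exact Order.lt_succ_of_le
      ((le_ciSup (f := c) Ordinal.bddAbove_of_small ⟨γ, hγ⟩).trans (le_max_right _ _))

theorem exists_mem_diagInter_ge (hκ : κ.IsRegular) (hℵ : ℵ₀ < κ)
    (hC : ∀ γ < κ.ord, IsClubIn (C γ) κ.ord) {a : Ordinal.{v}} (ha : a < κ.ord) :
    ∃ b ∈ diagInter C, a ≤ b ∧ b < κ.ord := by
  -- `nxt x` meets every `C γ`, `γ < x`, above `x`, so the supremum of the iterates `nxt^[n] a`
  -- is a limit of points of each `C γ` below it.
  choose! nxt hlt hnxt_lt hnxt using fun x (hx : x < κ.ord) =>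
    exists_forall_inter_Ico_nonempty hκ hC hx
  set x : ℕ → Ordinal.{v} := fun n => nxt^[n] a
  have hsucc (n : ℕ) : x (n + 1) = nxt (x n) := Function.iterate_succ_apply' nxt n a
  have hxo (n : ℕ) : x n < κ.ord := by
    induction n with
    | zero => exact ha
    | succ n ih => rw [hsucc]; exact hnxt_lt _ ih
  have hmono : Monotone x :=
    (strictMono_nat_of_lt_succ fun n => hsucc n ▸ hlt _ (hxo n)).monotone
  have hbdd : BddAbove (range x) := Ordinal.bddAbove_of_small
  have hb : ⨆ n, x n < κ.ord := hκ.iSup_lt_ord (by simpa using hℵ) hxo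
  refine ⟨⨆ n, x n, fun γ hγ => ?_, le_ciSup hbdd 0, hb⟩
  obtain ⟨n₀, hγn₀⟩ := exists_lt_of_lt_ciSup hγ
  refine (hC γ (hγ.trans hb)).2 _ hb (ne_bot_of_gt hγ)
    (Ordinal.csSup_inter_Iio_eq fun c hc => ?_)
  obtain ⟨n, hcn⟩ := exists_lt_of_lt_ciSup hc
  set m := max n n₀
  obtain ⟨d, hdC, hxd, hdx⟩ :=
    hnxt (x m) (hxo m) γ (hγn₀.trans_le (hmono (le_max_right _ _)))
  refine ⟨d, hdC, (hcn.trans_le (hmono (le_max_left _ _))).trans_le hxd, ?_⟩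
  exact hdx.trans_le (hsucc m ▸ le_ciSup hbdd (m + 1))

theorem isClubIn_diagInter (hκ : κ.IsRegular) (hℵ : ℵ₀ < κ)
    (hC : ∀ γ < κ.ord, IsClubIn (C γ) κ.ord) : IsClubIn (diagInter C) κ.ord :=
  ⟨fun _ ha => exists_mem_diagInter_ge hκ hℵ hC ha,
    fun _ ha ha0 hsup => diagInter_mem_of_sSup_eq hC ha ha0 hsup⟩

end DiagInter

theorem IsStationaryIn.exists_isStationaryIn_fiber {κ : Cardinal.{v}} (hκ : κ.IsRegular)
    (hℵ : ℵ₀ < κ) {S : Set Ordinal.{v}} (hS : IsStationaryIn S κ.ord)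
    {f : Ordinal.{v} → Ordinal.{v}} (hf : ∀ α ∈ S, f α < α) :
    ∃ b, IsStationaryIn {α ∈ S | f α = b} κ.ord := by
  by_contra! h
  simp only [IsStationaryIn, not_forall] at h
  choose C hC hCS using h
  obtain ⟨α, ⟨hαS, hαD⟩, hαo⟩ := hS _ (isClubIn_diagInter hκ hℵ fun γ _ => hC γ)
  exact hCS (f α) ⟨α, ⟨⟨hαS, rfl⟩, hαD _ (hf α hαS)⟩, hαo⟩

theorem IsStationaryIn.exists_subset_forall_lt_eq {κ : Cardinal.{v}} (hκ : κ.IsRegular)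
    (hℵ : ℵ₀ < κ) {S : Set Ordinal.{v}} (hS : IsStationaryIn S κ.ord)
    {f : Ordinal.{v} → ℕ → Ordinal.{v}} (hf : ∀ α ∈ S, ∀ n, f α n < α) (k : ℕ) :
    ∃ S' ⊆ S, IsStationaryIn S' κ.ord ∧
      ∀ α ∈ S', ∀ β ∈ S', ∀ l < k, f α l = f β l := by
  induction k with
  | zero => exact ⟨S, subset_rfl, hS, fun _ _ _ _ l hl => absurd hl l.not_lt_zero⟩
  | succ k ih =>
    obtain ⟨S', hS'S, hS', hS'eq⟩ := ih
    obtain ⟨b, hb⟩ := hS'.exists_isStationaryIn_fiber hκ hℵ fun α hα => hf α (hS'S hα) k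
    refine ⟨_, fun α hα => hS'S hα.1, hb, fun α hα β hβ l hl => ?_⟩
    rcases Nat.lt_succ_iff_lt_or_eq.1 hl with hl | rfl
    · exact hS'eq α hα.1 β hβ.1 l hl
    · exact hα.2.trans hβ.2.symm

theorem Cardinal.exists_cofinal_toType_cof (c : Cardinal.{u}) :
    ∃ f : c.ord.cof.ord.ToType → Cardinal.{u},
      (∀ j, f j < c) ∧ ∀ d < c, ∃ j, d ≤ f j := by
  obtain ⟨f, hf⟩ := Ordinal.exists_isFundamentalSeq (o := c.ord) rfl
  refine ⟨fun j => (f (Ordinal.ToType.mk.symm j)).1.card,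
    fun j => Cardinal.lt_ord.1 (f _).2, fun d hd => ?_⟩
  obtain ⟨_, ⟨i, rfl⟩, hi⟩ := hf.isCofinal_range ⟨d.ord, Cardinal.ord_lt_ord.2 hd⟩
  refine ⟨Ordinal.ToType.mk i, ?_⟩
  simpa using Cardinal.ord_le.1 (show d.ord ≤ (f i).1 from hi)

namespace SimpleGraph

variable {V : Type u} {G : SimpleGraph V}

theorem exists_subset_forall_mk_neighborSet_inter_lt {s : Set V} (hs : ℵ₀ ≤ #s)
    (hG : ∀ t ⊆ s, G.IsClique t → t.Finite) :
    ∃ Y ⊆ s, #Y = #s ∧ ∀ y ∈ Y, #(G.neighborSet y ∩ Y : Set V) < #s := by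
  classical
  -- Grow a finite clique `c` whose common neighbourhood `N c` in `s` keeps size `#s`. Without
  -- infinite cliques this gets stuck, and then no vertex of `N c` has `#s` neighbours in `N c`.
  let N (c : Finset V) : Set V := {v ∈ s | v ∉ c ∧ ∀ x ∈ c, G.Adj x v}
  let Good (c : Finset V) : Prop := G.IsClique (c : Set V) ∧ #(N c) = #s
  have hN (c : Finset V) (y : V) : N (insert y c) = G.neighborSet y ∩ N c := by
    ext v
    simp only [N, Finset.mem_insert, mem_ofPred_eq, mem_inter_iff, mem_neighborSet,
      forall_eq_or_imp, not_or]
    exact ⟨fun ⟨hv, ⟨_, hvc⟩, hy, hc⟩ => ⟨hy, hv, hvc, hc⟩,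
      fun ⟨hy, hv, hvc, hc⟩ => ⟨hv, ⟨hy.ne', hvc⟩, hy, hc⟩⟩
  by_cases hext : ∀ c, Good c → ∃ v ∈ N c, Good (insert v c)
  · exfalso
    have : Nonempty V := (mk_ne_zero_iff.1 (aleph0_pos.trans_le hs).ne').map Subtype.val
    choose! nxt hnxtN hnxtGood using hext
    let c (n : ℕ) : Finset V := Nat.rec ∅ (fun _ c => insert (nxt c) c) n
    have hgood (n : ℕ) : Good (c n) := by
      induction n with
      | zero => exact ⟨by simp [c], by simp [N, c]⟩
      | succ n ih => exact hnxtGood _ ih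
    have hmem {m n : ℕ} (h : m < n) : nxt (c m) ∈ c n := by
      induction n with
      | zero => omega
      | succ n ih =>
        rcases Nat.lt_succ_iff_lt_or_eq.1 h with h | rfl
        · exact Finset.mem_insert_of_mem (ih h)
        · exact Finset.mem_insert_self _ _
    have hadj {m n : ℕ} (h : m < n) : G.Adj (nxt (c m)) (nxt (c n)) :=
      (hnxtN _ (hgood n)).2.2 _ (hmem h)
    have hinj : Function.Injective fun n => nxt (c n) :=
      Function.Injective.of_lt_imp_ne fun m n h => (hadj h).ne
    refine infinite_range_of_injective hinj (hG _ ?_ ?_)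
    · rintro _ ⟨n, rfl⟩
      exact (hnxtN _ (hgood n)).1
    · rintro _ ⟨m, rfl⟩ _ ⟨n, rfl⟩ hne
      rcases lt_or_gt_of_ne fun h : m = n => hne (h ▸ rfl) with h | h
      · exact hadj h
      · exact (hadj h).symm
  · push Not at hext
    obtain ⟨c, hc, hmax⟩ := hext
    refine ⟨N c, fun v hv => hv.1, hc.2, fun y hy => ?_⟩
    refine ((mk_le_mk_of_subset inter_subset_right).trans_eq hc.2).lt_of_ne fun h =>
      hmax y hy ⟨?_, by rw [hN, h]⟩
    rw [Finset.coe_insert]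
    exact hc.1.insert fun x hx _ => (hy.2.2 x hx).symm

theorem exists_isIndepSet_of_forall_mk_neighborSet_inter_lt {Y : Set V} (hY : (#Y).IsRegular)
    (hdeg : ∀ y ∈ Y, #(G.neighborSet y ∩ Y : Set V) < #Y) :
    ∃ I ⊆ Y, G.IsIndepSet I ∧ #I = #Y := by
  -- A maximal independent `I` dominates `Y`; by regularity a small `I` would dominate little.
  obtain ⟨I, -, hI⟩ := zorn_subset_nonempty {I | I ⊆ Y ∧ G.IsIndepSet I}
    (fun c hc hchain _ => ⟨⋃₀ c, ⟨sUnion_subset fun I hI => (hc hI).1,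
      (pairwise_sUnion hchain.directedOn).2 fun I hI => (hc hI).2⟩,
      fun _ => subset_sUnion_of_mem⟩) ∅ ⟨empty_subset _, pairwise_empty _⟩
  obtain ⟨hIY, hIind⟩ := hI.prop
  refine ⟨I, hIY, hIind, (mk_le_mk_of_subset hIY).antisymm (not_lt.1 fun hlt => ?_)⟩
  have hcover : Y ⊆ I ∪ ⋃ x ∈ I, G.neighborSet x ∩ Y := by
    intro y hy
    by_contra hyc
    simp only [mem_union, mem_iUnion, mem_inter_iff, mem_neighborSet, not_or, not_exists,
      not_and] at hyc
    have hins : insert y I ⊆ Y ∧ G.IsIndepSet (insert y I) :=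
      ⟨insert_subset hy hIY, hIind.insert fun x hx _ => ⟨fun h => hyc.2 x hx h.symm hy,
        fun h => hyc.2 x hx h hy⟩⟩
    exact hyc.1 (hI.eq_of_subset hins (subset_insert y I) ▸ mem_insert y I)
  have hnbr : #(⋃ x ∈ I, G.neighborSet x ∩ Y) < #Y :=
    (card_biUnion_lt_iff_forall_of_isRegular hY hlt).2 fun x hx => hdeg x (hIY hx)
  exact ((mk_le_mk_of_subset hcover).trans (mk_union_le _ _)).not_gt
    (add_lt_of_lt hY.aleph0_le hlt hnbr)

theorem exists_isIndepSet_of_isRegular {s : Set V} (hs : (#s).IsRegular)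
    (hG : ∀ t ⊆ s, G.IsClique t → t.Finite) : ∃ I ⊆ s, G.IsIndepSet I ∧ #I = #s := by
  obtain ⟨Y, hYs, hY, hdeg⟩ := exists_subset_forall_mk_neighborSet_inter_lt hs.aleph0_le hG
  rw [← hY] at hs hdeg
  obtain ⟨I, hIY, hI, hIcard⟩ := exists_isIndepSet_of_forall_mk_neighborSet_inter_lt hs hdeg
  exact ⟨I, hIY.trans hYs, hI, hIcard.trans hY⟩

section Singular

variable {Y : Set V} (hY : (#Y).IsSingular)
  (hdeg : ∀ y ∈ Y, #(G.neighborSet y ∩ Y : Set V) < #Y)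
  (hpiece : ∀ Z ⊆ Y, (#Z).IsRegular → ∃ I ⊆ Z, G.IsIndepSet I ∧ #I = #Z)
include hY hdeg

theorem exists_lt_mk_setOf_mk_neighborSet_inter_le {σ : Cardinal.{u}} (hσ : σ < #Y) :
    ∃ ν < #Y, σ < #{y ∈ Y | #(G.neighborSet y ∩ Y : Set V) ≤ ν} := by
  obtain ⟨c, hc, hcof⟩ := Cardinal.exists_cofinal_toType_cof #Y
  by_contra! h
  have hcover : Y ⊆ ⋃ j, {y ∈ Y | #(G.neighborSet y ∩ Y : Set V) ≤ c j} := fun y hy =>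
    let ⟨j, hj⟩ := hcof _ (hdeg y hy)
    mem_iUnion.2 ⟨j, hy, hj⟩
  have hle := (mk_le_mk_of_subset hcover).trans
    ((mk_iUnion_le _).trans (mul_le_mul' le_rfl (ciSup_le' fun j => h _ (hc j))))
  rw [mk_toType, card_ord] at hle
  exact hle.not_gt (mul_lt_of_lt hY.aleph0_le hY.cof_ord_lt hσ)

include hpiece in
theorem exists_isIndepSet_diff_mk_biUnion_lt {F : Set V} (hF : #F < #Y) {t : Cardinal.{u}}
    (ht : t < #Y) : ∃ A ⊆ Y \ F, G.IsIndepSet A ∧ t ≤ #A ∧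
      #(⋃ a ∈ A, G.neighborSet a ∩ Y) < #Y := by
  set t' := Order.succ (max t ℵ₀)
  have hℵ : ℵ₀ < #Y :=
    hY.aleph0_le.lt_of_ne fun h => hY.not_isRegular (h ▸ isRegular_aleph0)
  have ht' : t' < #Y := hY.isSuccLimit.succ_lt (max_lt ht hℵ)
  obtain ⟨ν, hν, hνY⟩ := exists_lt_mk_setOf_mk_neighborSet_inter_le hY hdeg (max_lt hF ht')
  set Yν := {y ∈ Y | #(G.neighborSet y ∩ Y : Set V) ≤ ν}
  have hdiff : t' ≤ #(Yν \ F : Set V) := by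
    by_contra! h
    refine (le_mk_sdiff_add_mk Yν F).not_gt (add_lt_of_lt ?_ ?_ ?_)
    · exact (le_max_right t ℵ₀).trans
        ((Order.le_succ _).trans ((le_max_right _ _).trans hνY.le))
    · exact h.trans_le ((le_max_right _ _).trans hνY.le)
    · exact (le_max_left _ _).trans_lt hνY
  obtain ⟨Z, hZ, hZcard⟩ := le_mk_iff_exists_subset.1 hdiff
  obtain ⟨A, hAZ, hA, hAcard⟩ :=
    hpiece Z (hZ.trans (sdiff_subset.trans (sep_subset _ _)))
      (hZcard ▸ isRegular_succ le_sup_right)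
  refine ⟨A, fun a ha => ⟨(hZ (hAZ ha)).1.1, (hZ (hAZ ha)).2⟩, hA, ?_, ?_⟩
  · rw [hAcard, hZcard]
    exact (le_max_left _ _).trans (Order.le_succ _)
  · calc #(⋃ a ∈ A, G.neighborSet a ∩ Y)
          ≤ #A * ⨆ a : A, #(G.neighborSet a ∩ Y : Set V) := mk_biUnion_le _ _
      _ ≤ t' * ν := mul_le_mul' (hAcard.trans hZcard).le
          (ciSup_le' fun a => (hZ (hAZ a.2)).1.2)
      _ < #Y := mul_lt_of_lt hY.aleph0_le ht' hν

include hpiece in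
theorem exists_isIndepSet_of_isSingular : ∃ I ⊆ Y, G.IsIndepSet I ∧ #I = #Y := by
  obtain ⟨c, hc, hcof⟩ := Cardinal.exists_cofinal_toType_cof #Y
  have hsucc (j) : Order.succ (c j) < #Y := hY.isSuccLimit.succ_lt (hc j)
  let nbr (A : Set V) : Set V := ⋃ a ∈ A, G.neighborSet a ∩ Y
  choose! pick hpickY hpick hpick_card hpick_nbr using
    fun (F : Set V) (hF : #F < #Y) t (ht : t < #Y) =>
      exists_isIndepSet_diff_mk_biUnion_lt hY hdeg hpiece hF ht
  -- `A j` is independent of size `> c j` and avoids the neighbourhoods `F j` of the earlier `A l`;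
  -- `F j` stays small because `j` has fewer than `cf #Y` predecessors.
  let J := (#Y).ord.cof.ord.ToType
  let A : J → Set V := wellFounded_lt.fix fun j IH =>
    pick (⋃ (l) (hl : l < j), nbr (IH l hl)) (Order.succ (c j))
  let F (j : J) : Set V := ⋃ l ∈ Iio j, nbr (A l)
  have hA (j : J) : A j = pick (F j) (Order.succ (c j)) := wellFounded_lt.fix_eq _ j
  have hIio (j : J) : #(Iio j) < (#Y).ord.cof := by simpa [J] using mk_Iio_lt j (by simp [J])
  have hF_of (j : J) (IH : ∀ l < j, #(nbr (A l)) < #Y) : #(F j) < #Y :=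
    (mk_biUnion_le _ _).trans_lt (mul_lt_of_lt hY.aleph0_le
      ((hIio j).trans hY.cof_ord_lt) (iSup_lt_of_lt_cof_ord (hIio j) fun l => IH l l.2))
  have hnbr (j : J) : #(nbr (A j)) < #Y := by
    induction j using WellFoundedLT.induction with
    | _ j IH => exact hA j ▸ hpick_nbr _ (hF_of j IH) _ (hsucc j)
  have hF (j : J) : #(F j) < #Y := hF_of j fun l _ => hnbr l
  have hAF (j : J) : A j ⊆ Y \ F j := hA j ▸ hpickY _ (hF j) _ (hsucc j)
  have hcross {j l : J} (h : l < j) {x y : V} (hx : x ∈ A j) (hy : y ∈ A l) : ¬G.Adj x y :=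
    fun hxy => (hAF j hx).2 (mem_biUnion h (mem_biUnion hy ⟨hxy.symm, (hAF j hx).1⟩))
  refine ⟨⋃ j, A j, iUnion_subset fun j => (hAF j).trans sdiff_subset, ?_, ?_⟩
  · rintro x hx y hy hne
    obtain ⟨j, hxj⟩ := mem_iUnion.1 hx
    obtain ⟨l, hyl⟩ := mem_iUnion.1 hy
    rcases lt_trichotomy l j with h | rfl | h
    · exact hcross h hxj hyl
    · exact (hA l ▸ hpick _ (hF l) _ (hsucc l)) hxj hyl hne
    · exact fun hxy => hcross h hyl hxj hxy.symm
  · refine (mk_le_mk_of_subset (iUnion_subset fun j => (hAF j).trans sdiff_subset)).antisymm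
      (not_lt.1 fun hlt => ?_)
    obtain ⟨j, hj⟩ := hcof _ hlt
    exact (Order.lt_succ_of_le hj).not_ge ((hA j ▸ hpick_card _ (hF j) _ (hsucc j)).trans
      (mk_le_mk_of_subset (subset_iUnion A j)))

end Singular

theorem exists_isIndepSet_of_forall_isClique_finite {s : Set V} (hs : ℵ₀ ≤ #s)
    (hG : ∀ t ⊆ s, G.IsClique t → t.Finite) : ∃ I ⊆ s, G.IsIndepSet I ∧ #I = #s := by
  rcases isRegular_or_isSingular hs with hreg | hsing
  · exact exists_isIndepSet_of_isRegular hreg hG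
  obtain ⟨Y, hYs, hY, hdeg⟩ := exists_subset_forall_mk_neighborSet_inter_lt hs hG
  rw [← hY] at hsing hdeg
  obtain ⟨I, hIY, hI, hIcard⟩ := exists_isIndepSet_of_isSingular hsing hdeg fun Z hZ hZreg =>
    exists_isIndepSet_of_isRegular hZreg fun t ht => hG t (ht.trans (hZ.trans hYs))
  exact ⟨I, hIY.trans hYs, hI, hIcard.trans hY⟩

end SimpleGraph

section Obstruction

variable {V : Type u} {G : SimpleGraph V}

theorem exists_infinite_isIndepSet_of_not_hasCompleteSubgraph {μ : Cardinal.{u}}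
    (hμ : ℵ₀ ≤ μ) (hG : ¬HasCompleteSubgraph G μ) {s : Set V} (hs : μ ≤ #s) :
    ∃ t ⊆ s, t.Infinite ∧ G.IsIndepSet t := by
  obtain ⟨s', hs's, hs'⟩ := le_mk_iff_exists_subset.1 hs
  by_contra! h
  obtain ⟨I, -, hI, hIcard⟩ := Gᶜ.exists_isIndepSet_of_forall_isClique_finite (hs' ▸ hμ)
    fun t ht hclique => not_infinite.1 fun hinf =>
      h t (ht.trans hs's) hinf ((SimpleGraph.isClique_compl _).1 hclique)
  exact hG ⟨I, hIcard.trans hs', (SimpleGraph.isIndepSet_compl _).1 hI⟩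

theorem hasInducedKkOmega_of_infinite {k : ℕ} {A B : Set V} (hAB : Disjoint A B)
    (hA : #A = k) (hB : B.Infinite) (hadj : ∀ a ∈ A, ∀ b ∈ B, G.Adj a b)
    (hAind : G.IsIndepSet A) (hBind : G.IsIndepSet B) : HasInducedKkOmega G k := by
  obtain ⟨B', hB'B, hB'⟩ := le_mk_iff_exists_subset.1 (infinite_iff.1 hB.to_subtype)
  exact ⟨A, B', hAB.mono_right hB'B, hA, hB', fun a ha b hb => hadj a ha b (hB'B hb), hAind,
    hBind.mono hB'B⟩

end Obstruction

theorem mk_neighborSet_inter_Iio_of_mem_typeIITarget {H : SimpleGraph Ordinal.{v}}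
    {μ : Cardinal.{v}} {α : Ordinal.{v}} (hα : α ∈ typeIITarget H μ) :
    #(H.neighborSet α ∩ Iio α : Set Ordinal.{v}) = Cardinal.lift.{v + 1} μ := by
  have h := congrArg Ordinal.card hα.2.1
  rwa [Ordinal.card_type, ← Ordinal.lift_card, Cardinal.card_ord] at h

section TypeII

variable {G : SimpleGraph Ordinal.{v}} {μ κ : Cardinal.{v}}

theorem exists_injective_range_subset_of_mem_typeIITarget (hμ : ℵ₀ ≤ μ)
    (hK : ¬HasCompleteSubgraph G (Cardinal.lift.{v + 1} μ)) {α : Ordinal.{v}}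
    (hα : α ∈ typeIITarget G μ) : ∃ e : ℕ → Ordinal.{v}, Function.Injective e ∧
      range e ⊆ G.neighborSet α ∩ Iio α ∧ G.IsIndepSet (range e) := by
  obtain ⟨t, htN, htinf, htind⟩ := exists_infinite_isIndepSet_of_not_hasCompleteSubgraph
    (by simpa using hμ) hK (mk_neighborSet_inter_Iio_of_mem_typeIITarget hα).ge
  have hrange : range (fun n => (htinf.natEmbedding _ n : Ordinal.{v})) ⊆ t := by
    rintro _ ⟨n, rfl⟩
    exact (htinf.natEmbedding _ n).2
  exact ⟨_, fun m n h => (htinf.natEmbedding _).injective (Subtype.ext h), hrange.trans htN,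
    htind.mono hrange⟩

theorem IsTypeIIObstruction.exists_isStationaryIn_subset_neighborSet
    (h : IsTypeIIObstruction G μ κ) (hμ : ℵ₀ ≤ μ)
    (hK : ¬HasCompleteSubgraph G (Cardinal.lift.{v + 1} μ)) (k : ℕ) :
    ∃ S, IsStationaryIn S κ.ord ∧ ∃ A : Set Ordinal.{v}, #A = k ∧ G.IsIndepSet A ∧
      ∀ β ∈ S, A ⊆ G.neighborSet β ∩ Iio β := by
  obtain ⟨hμκ, hκ, -, hT⟩ := h
  choose! e he_inj he_mem he_ind using
    fun α (hα : α ∈ typeIITarget G μ) =>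
      exists_injective_range_subset_of_mem_typeIITarget hμ hK hα
  obtain ⟨S, hST, hS, hSeq⟩ := hT.exists_subset_forall_lt_eq hκ (hμ.trans_lt hμκ)
    (fun α hα n => (he_mem α hα (mem_range_self n)).2) k
  obtain ⟨α₀, hα₀, -⟩ := hS.exists_mem_lt
  refine ⟨S, hS, e α₀ '' Iio k, ?_, (he_ind α₀ (hST hα₀)).mono (image_subset_range _ _),
    ?_⟩
  · rw [← Finset.coe_range, ← Finset.coe_image]
    refine mk_coe_finset.trans ?_
    rw [Finset.card_image_of_injective _ (he_inj α₀ (hST hα₀)), Finset.card_range]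
  · rintro β hβ _ ⟨l, hl, rfl⟩
    exact hSeq α₀ hα₀ β hβ l hl ▸ he_mem β (hST hβ) (mem_range_self l)

end TypeII

/-- every `μ`-obstruction of type II contains a `K_μ` subgraph or,
for every positive `k`, an induced `K_{k,ω}`. -/
theorem stmt15 (μ κ : Cardinal.{0}) (hμ : ℵ₀ ≤ μ) (G : SimpleGraph Ordinal.{0})
    (h : IsTypeIIObstruction G μ κ) :
    HasCompleteSubgraph G (Cardinal.lift.{1} μ) ∨
      ∀ k : ℕ, 0 < k → HasInducedKkOmega G k := by
  refine or_iff_not_imp_left.2 fun hK k _ => ?_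
  obtain ⟨S, hS, A, hAk, hAind, hAS⟩ := h.exists_isStationaryIn_subset_neighborSet hμ hK k
  obtain ⟨B, hBS, hBinf, hBind⟩ := exists_infinite_isIndepSet_of_not_hasCompleteSubgraph
    (by simpa using hμ) hK ((Cardinal.lift_le.2 h.1.le).trans (hS.lift_le_mk h.2.1))
  refine hasInducedKkOmega_of_infinite (disjoint_left.2 fun a ha haB => ?_) hAk hBinf
    (fun a ha b hb => (hAS b (hBS hb) ha).1.symm) hAind hBind
  exact lt_irrefl a (hAS a (hBS haB) ha).2
end

section
/- For every infinite cardinal λ, any graph G on λ vertices contains either a clique of size λ or a countably infinite independent set. (Dushnik–Erdős–Miller: λ → (λ, ω)².) -/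
open Cardinal

universe u v

/-!
Write `H = Gᶜ` and assume `H` has no infinite clique; we find an `H`-independent set of size `λ`.
Inside any set of size at least `κ` there is a subset `A` of size at least `κ` in which every
vertex has fewer than `κ` neighbours: take for `A` the common neighbourhood of a finite clique that
is maximal among those with a common neighbourhood of size at least `κ` (maximal elements exist
because an increasing sequence of finite cliques would have an infinite clique as its union).
For regular `κ`, a maximal independent subset of `A` has size `κ`, as otherwise it and its
neighbourhood would be too small to cover `A`. For singular `λ`, follow a cofinal sequence
`(e i)_{i < cf λ}` below `λ` and choose, by transfinite recursion, independent sets `S i` of regular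
size `> e i` avoiding the neighbourhoods of the earlier ones; the union of the `S i` is independent
of size `λ`.
-/

open Set

namespace Cardinal

theorem exists_cofinal_of_ord_cof (c : Cardinal.{u}) :
    ∃ e : c.ord.cof.ord.ToType → Cardinal.{u}, (∀ i, e i < c) ∧ ∀ a < c, ∃ i, a ≤ e i := by
  obtain ⟨f, hf⟩ := Ordinal.exists_isFundamentalSeq (o := c.ord) rfl
  refine ⟨fun i => (f (Ordinal.ToType.mk.symm i)).1.card, fun i => lt_ord.1 (f _).2,
    fun a ha => ?_⟩
  obtain ⟨_, ⟨j, rfl⟩, hj⟩ := hf.isCofinal_range ⟨a.ord, ord_lt_ord.2 ha⟩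
  exact ⟨Ordinal.ToType.mk j, by simpa using ord_le.1 hj⟩

theorem mk_biUnion_lt_of_lt_cof {ι α : Type u} {c : Cardinal.{u}} (hc : ℵ₀ ≤ c) {s : Set ι}
    (hs : #s < c.ord.cof) {A : ι → Set α} (hA : ∀ i ∈ s, #(A i) < c) :
    #(⋃ i ∈ s, A i) < c :=
  (mk_biUnion_le A s).trans_lt <| mul_lt_of_lt hc (hs.trans_le (Ordinal.cof_ord_le c))
    (iSup_lt_of_lt_cof_ord hs fun i => hA i i.2)

theorem exists_lt_mk_setOf_le_of_cof_ord_lt {α : Type u} {c : Cardinal.{u}} (hc : ℵ₀ ≤ c)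
    (hcof : c.ord.cof < c) {A : Set α} (hA : c ≤ #A) {f : α → Cardinal.{u}}
    (hf : ∀ a ∈ A, f a < c) {b : Cardinal.{u}} (hb : b < c) :
    ∃ μ < c, b < #{a ∈ A | f a ≤ μ} := by
  obtain ⟨e, he, he_cofinal⟩ := exists_cofinal_of_ord_cof c
  by_contra! hsmall
  have hcover : A ⊆ ⋃ i, {a ∈ A | f a ≤ e i} := fun a ha =>
    let ⟨i, hi⟩ := he_cofinal _ (hf a ha)
    mem_iUnion.2 ⟨i, ha, hi⟩
  have hA_le : #A ≤ c.ord.cof * b := by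
    refine (mk_le_mk_of_subset hcover).trans ((mk_iUnion_le _).trans ?_)
    rw [mk_toType, card_ord]
    exact mul_le_mul_right (ciSup_le' fun i => hsmall _ (he i)) _
  exact (hA.trans hA_le).not_gt (mul_lt_of_lt hc hcof hb)

end Cardinal

theorem exists_forall_disjoint_biUnion_lt {ι α : Type*} [LinearOrder ι] [WellFoundedLT ι]
    (P : ι → Set α → Prop) (N : Set α → Set α)
    (h : ∀ i (T : ι → Set α), (∀ j < i, P j (T j)) →
      ∃ S, P i S ∧ Disjoint S (⋃ j < i, N (T j))) :
    ∃ T : ι → Set α, ∀ i, P i (T i) ∧ Disjoint (T i) (⋃ j < i, N (T j)) := by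
  classical
  let T : ι → Set α := wellFounded_lt.fix fun i T =>
    if h : ∃ S, P i S ∧ Disjoint S (⋃ j, ⋃ hj : j < i, N (T j hj)) then h.choose else ∅
  refine ⟨T, fun i => ?_⟩
  induction i using WellFoundedLT.induction with | _ i ih => ?_
  have hT : T i = if h : ∃ S, P i S ∧ Disjoint S (⋃ j < i, N (T j)) then h.choose else ∅ :=
    wellFounded_lt.fix_eq _ _
  have hex := h i T fun j hj => (ih j hj).1
  rw [hT, dif_pos hex]
  exact hex.choose_spec

namespace SimpleGraph

variable {V : Type u} {G : SimpleGraph V}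

theorem wellFoundedOn_gt_setOf_isClique (hG : ∀ s : Set V, G.IsClique s → s.Finite) :
    {F : Finset V | G.IsClique (F : Set V)}.WellFoundedOn (· > ·) := by
  rw [Set.wellFoundedOn_iff_no_descending_seq]
  intro f hf
  have hf_mono : StrictMono f := fun _ _ h => f.map_rel_iff.2 h
  have hU : G.IsClique (⋃ n, (f n : Set V)) :=
    (isClique_iUnion <| Monotone.directed_le fun _ _ h =>
      Finset.coe_subset.2 (hf_mono.monotone h)).2 hf
  have hrange : range f ⊆ (hG _ hU).toFinset.powerset := by
    rintro _ ⟨n, rfl⟩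
    simpa [← Finset.coe_subset] using subset_iUnion (fun n => (f n : Set V)) n
  exact infinite_range_of_injective f.injective ((Finset.finite_toSet _).subset hrange)

theorem exists_subset_forall_mk_neighborSet_inter_lt_s17 (hG : ∀ s : Set V, G.IsClique s → s.Finite)
    {κ : Cardinal.{u}} {A₀ : Set V} (hA₀ : κ ≤ #A₀) :
    ∃ A ⊆ A₀, κ ≤ #A ∧ ∀ v ∈ A, #(G.neighborSet v ∩ A : Set V) < κ := by
  classical
  let cn : Finset V → Set V := fun F => {w ∈ A₀ | ∀ v ∈ F, G.Adj v w}
  obtain ⟨F, ⟨hFc, hFκ⟩, hFmax⟩ :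
      ∃ F, Maximal (· ∈ {F : Finset V | G.IsClique (F : Set V) ∧ κ ≤ #(cn F)}) F :=
    ((wellFoundedOn_gt_setOf_isClique hG).subset fun _ h => h.1).exists_maximal
      ⟨∅, by simp, hA₀.trans (mk_le_mk_of_subset fun w hw => ⟨hw, by simp⟩)⟩
  refine ⟨cn F, fun w hw => hw.1, hFκ, fun v hv => ?_⟩
  have hvF : v ∉ F := fun h => G.irrefl (hv.2 v h)
  have hclique : G.IsClique (insert v F : Finset V) := by
    rw [Finset.coe_insert, isClique_insert]
    exact ⟨hFc, fun b hb _ => (hv.2 b hb).symm⟩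
  have hsmall : #(cn (insert v F)) < κ := by
    by_contra! h
    exact hvF (hFmax ⟨hclique, h⟩ (Finset.subset_insert v F) (Finset.mem_insert_self v F))
  refine (mk_le_mk_of_subset ?_).trans_lt hsmall
  rintro w ⟨hvw, hw⟩
  refine ⟨hw.1, fun u hu => ?_⟩
  rcases Finset.mem_insert.1 hu with rfl | hu
  · exact hvw
  · exact hw.2 u hu

theorem exists_isIndepSet_subset_of_forall_mk_neighborSet_inter_lt {κ : Cardinal.{u}}
    (hκ : κ.IsRegular) {A : Set V} (hA : κ ≤ #A)
    (hdeg : ∀ v ∈ A, #(G.neighborSet v ∩ A : Set V) < κ) :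
    ∃ s ⊆ A, G.IsIndepSet s ∧ #s = κ := by
  obtain ⟨M, ⟨hMA, hM⟩, hMmax⟩ := zorn_subset {s | s ⊆ A ∧ G.IsIndepSet s} fun c hc hchain =>
    ⟨⋃₀ c, ⟨sUnion_subset fun s hs => (hc hs).1,
      (pairwise_sUnion hchain.directedOn).2 fun s hs => (hc hs).2⟩,
      fun _ => subset_sUnion_of_mem⟩
  have hcover : A ⊆ M ∪ ⋃ m : M, G.neighborSet m ∩ A := by
    intro v hv
    by_contra! hvM
    simp only [mem_union, mem_iUnion, not_or, not_exists] at hvM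
    have hvM_indep : G.IsIndepSet (insert v M) := by
      rw [← isClique_compl, isClique_insert]
      exact ⟨(isClique_compl G).2 hM, fun b hb hvb =>
        (compl_adj G v b).2 ⟨hvb, fun h => hvM.2 ⟨b, hb⟩ ⟨h.symm, hv⟩⟩⟩
    exact hvM.1 (hMmax ⟨insert_subset hv hMA, hvM_indep⟩ (subset_insert v M) (mem_insert v M))
  have hκM : κ ≤ #M := by
    by_contra! hMκ
    have hN : #(⋃ m : M, G.neighborSet m ∩ A : Set V) < κ :=
      (card_iUnion_lt_iff_forall_of_isRegular hκ hMκ).2 fun m => hdeg m (hMA m.2)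
    exact (hA.trans ((mk_le_mk_of_subset hcover).trans (mk_union_le _ _))).not_gt
      (add_lt_of_lt hκ.aleph0_le hMκ hN)
  obtain ⟨s, hsM, hs⟩ := le_mk_iff_exists_subset.1 hκM
  exact ⟨s, hsM.trans hMA, hM.mono hsM, hs⟩

theorem exists_isIndepSet_subset_of_isRegular (hG : ∀ s : Set V, G.IsClique s → s.Finite)
    {κ : Cardinal.{u}} (hκ : κ.IsRegular) {A₀ : Set V} (hA₀ : κ ≤ #A₀) :
    ∃ s ⊆ A₀, G.IsIndepSet s ∧ #s = κ := by
  obtain ⟨A, hAA₀, hA, hdeg⟩ := exists_subset_forall_mk_neighborSet_inter_lt_s17 hG hA₀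
  obtain ⟨s, hsA, hs⟩ := exists_isIndepSet_subset_of_forall_mk_neighborSet_inter_lt hκ hA hdeg
  exact ⟨s, hsA.trans hAA₀, hs⟩

theorem exists_isIndepSet_disjoint_of_isSingular (hG : ∀ s : Set V, G.IsClique s → s.Finite)
    {κ : Cardinal.{u}} (hκ : κ.IsSingular) {A : Set V} (hA : κ ≤ #A)
    (hdeg : ∀ v ∈ A, #(G.neighborSet v ∩ A : Set V) < κ) {c : Cardinal.{u}} (hc : c < κ)
    {X : Set V} (hX : #X < κ) :
    ∃ s ⊆ A, G.IsIndepSet s ∧ c < #s ∧ #(⋃ v ∈ s, G.neighborSet v ∩ A : Set V) < κ ∧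
      Disjoint s X := by
  have haleph0_lt : ℵ₀ < κ := hκ.aleph0_le.lt_of_ne fun h => not_isSingular_aleph0 (h ▸ hκ)
  set θ := Order.succ (max c ℵ₀)
  have hθ : θ.IsRegular := isRegular_succ (le_max_right _ _)
  have hθκ : θ < κ := hκ.isSuccLimit.succ_lt (max_lt hc haleph0_lt)
  obtain ⟨μ, hμκ, hμ⟩ := exists_lt_mk_setOf_le_of_cof_ord_lt hκ.aleph0_le hκ.cof_ord_lt hA hdeg
    (add_lt_of_lt hκ.aleph0_le hθκ hX)
  set B := {v ∈ A | #(G.neighborSet v ∩ A : Set V) ≤ μ}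
  have hθB : θ ≤ #(B \ X : Set V) := by
    by_contra! h
    exact hμ.not_ge ((mk_le_mk_of_subset (subset_sdiff_union B X)).trans
      ((mk_union_le _ _).trans (add_le_add_left h.le _)))
  obtain ⟨s, hsB, hs, hsθ⟩ := exists_isIndepSet_subset_of_isRegular hG hθ hθB
  refine ⟨s, fun v hv => (hsB hv).1.1, hs, hsθ ▸ Order.lt_succ_of_le (le_max_left _ _), ?_,
    disjoint_sdiff_left.mono_left hsB⟩
  refine (mk_biUnion_le _ s).trans_lt ?_
  rw [hsθ]
  exact (mul_le_mul_right (ciSup_le' fun v => (hsB v.2).1.2) _).trans_lt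
    (mul_lt_of_lt hκ.aleph0_le hθκ hμκ)

theorem exists_isIndepSet_of_isSingular_s17 (hG : ∀ s : Set V, G.IsClique s → s.Finite)
    {κ : Cardinal.{u}} (hκ : κ.IsSingular) (hV : κ ≤ #V) : ∃ s, G.IsIndepSet s ∧ #s = κ := by
  obtain ⟨A, -, hA, hdeg⟩ :=
    exists_subset_forall_mk_neighborSet_inter_lt_s17 hG (hV.trans_eq mk_univ.symm)
  obtain ⟨e, he, he_cofinal⟩ := exists_cofinal_of_ord_cof κ
  let N : Set V → Set V := fun s => ⋃ v ∈ s, G.neighborSet v ∩ A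
  obtain ⟨T, hT⟩ := exists_forall_disjoint_biUnion_lt
      (fun i s => s ⊆ A ∧ G.IsIndepSet s ∧ e i < #s ∧ #(N s) < κ) N fun i T hT => by
    obtain ⟨s, hsA, hs, hes, hN, hX⟩ := exists_isIndepSet_disjoint_of_isSingular hG hκ hA hdeg
      (he i) (mk_biUnion_lt_of_lt_cof (s := Iio i) hκ.aleph0_le
        (by simpa using mk_Iio_lt i (by simp)) fun j hj => (hT j hj).2.2.2)
    exact ⟨s, ⟨hsA, hs, hes, hN⟩, hX⟩
  have hcross : ∀ i j, i < j → ∀ a ∈ T i, ∀ b ∈ T j, ¬G.Adj a b :=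
    fun i j hij a ha b hb hadj => Set.disjoint_left.1 (hT j).2 hb <|
      mem_iUnion₂.2 ⟨i, hij, mem_iUnion₂.2 ⟨a, ha, hadj, (hT j).1.1 hb⟩⟩
  have hB : G.IsIndepSet (⋃ i, T i) := by
    simp only [IsIndepSet, Set.Pairwise, mem_iUnion]
    rintro a ⟨i, ha⟩ b ⟨j, hb⟩ hab
    rcases lt_trichotomy i j with hij | rfl | hij
    · exact hcross i j hij a ha b hb
    · exact (hT i).1.2.1 ha hb hab
    · exact fun h => hcross j i hij b hb a ha h.symm
  have hκB : κ ≤ #(⋃ i, T i) := by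
    by_contra! h
    obtain ⟨i, hi⟩ := he_cofinal _ h
    exact (hi.trans_lt (hT i).1.2.2.1).not_ge (mk_le_mk_of_subset (subset_iUnion T i))
  obtain ⟨s, hsB, hs⟩ := le_mk_iff_exists_subset.1 hκB
  exact ⟨s, hB.mono hsB, hs⟩

theorem exists_isIndepSet_of_isClique_finite (hG : ∀ s : Set V, G.IsClique s → s.Finite)
    {κ : Cardinal.{u}} (hκ : ℵ₀ ≤ κ) (hV : κ ≤ #V) : ∃ s, G.IsIndepSet s ∧ #s = κ := by
  rcases isRegular_or_isSingular hκ with hreg | hsing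
  · obtain ⟨s, -, hs⟩ :=
      exists_isIndepSet_subset_of_isRegular hG hreg (hV.trans_eq mk_univ.symm)
    exact ⟨s, hs⟩
  · exact exists_isIndepSet_of_isSingular_s17 hG hsing hV

end SimpleGraph

/-- Dushnik–Erdős–Miller, `λ → (λ, ω)²`: every graph on `λ`
vertices, `λ` infinite, contains a clique of size `λ` or a countably infinite
independent set. -/
theorem stmt17 {V : Type u} (G : SimpleGraph V) (lam : Cardinal.{u})
    (hlam : ℵ₀ ≤ lam) (hV : #V = lam) :
    (∃ S : Set V, #S = lam ∧ S.Pairwise G.Adj) ∨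
    (∃ S : Set V, #S = ℵ₀ ∧ ∀ a ∈ S, ∀ b ∈ S, a ≠ b → ¬ G.Adj a b) := by
  by_cases hindep : ∃ S : Set V, #S = ℵ₀ ∧ ∀ a ∈ S, ∀ b ∈ S, a ≠ b → ¬ G.Adj a b
  · exact Or.inr hindep
  have hG : ∀ s : Set V, Gᶜ.IsClique s → s.Finite := by
    intro s hs
    by_contra hinf
    obtain ⟨S, hSs, hS⟩ :=
      le_mk_iff_exists_subset.1 (aleph0_le_mk_iff.2 (infinite_coe_iff.2 hinf))
    exact hindep ⟨S, hS, (G.isClique_compl).1 (hs.subset hSs)⟩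
  obtain ⟨S, hS, hcard⟩ := SimpleGraph.exists_isIndepSet_of_isClique_finite hG hlam hV.ge
  exact Or.inl ⟨S, hcard, (G.isIndepSet_compl).1 hS⟩
end
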